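/- arXiv:2210.07780 — 3 statements merged into one kernel-verified Lean document; each statement's English description precedes it below -/
import Mathlib

section
/- Let v ∈ P and ω ∈ Γ. Then (1/2)·g̃_v(ω) ≤ g_v(ω) ≤ g̃_v(ω). (Lemma 2 of the paper.) -/
open Finset
open scoped Classical

namespace HetTS

noncomputable section

variable {K M : ℕ}

/-- Number of clients having access to arm `i`. -/
def Mi (S : Fin M → Finset (Fin K)) (i : Fin K) : ℕ :=
  (Finset.univ.filter fun m => i ∈ S m).card

/-- The mean reward `μ_i(v)` of arm `i`: average of the means of arm `i` across the clients
having access to it. -/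
def armMean (S : Fin M → Finset (Fin K)) (v : Fin M → Fin K → ℝ) (i : Fin K) : ℝ :=
  (1 / (Mi S i : ℝ)) * ∑ m ∈ Finset.univ.filter (fun m => i ∈ S m), v m i

/-- Arm `i` is the (unique) best arm of client `m` under instance `v`. -/
def isBest (S : Fin M → Finset (Fin K)) (v : Fin M → Fin K → ℝ) (m : Fin M) (i : Fin K) :
    Prop :=
  i ∈ S m ∧ ∀ j ∈ S m, j ≠ i → armMean S v j < armMean S v i

/-- The set `P` of problem instances having a unique best arm at each client. -/
def PSet (S : Fin M → Finset (Fin K)) : Set (Fin M → Fin K → ℝ) :=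
  {v | ∀ m, ∃ i, isBest S v m i}

/-- The set of alternative instances `Alt(v)`: instances in `P` whose tuple of best arms
differs from that of `v`. -/
def AltSet (S : Fin M → Finset (Fin K)) (v : Fin M → Fin K → ℝ) :
    Set (Fin M → Fin K → ℝ) :=
  {v' | v' ∈ PSet S ∧ ¬ ∀ (m : Fin M) (i : Fin K), isBest S v m i ↔ isBest S v' m i}

/-- The set `Γ` of allocations: families `(ω_{i,m})_{m, i ∈ S_m}` of nonnegative weights
summing to one for each client (represented as functions vanishing off the support). -/
def Gam (S : Fin M → Finset (Fin K)) : Set (Fin M → Fin K → ℝ) :=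
  {ω | (∀ m, ∀ i ∈ S m, 0 ≤ ω m i) ∧ (∀ m, ∑ i ∈ S m, ω m i = 1) ∧
    ∀ m, ∀ i, i ∉ S m → ω m i = 0}

/-- `g_v(ω)`, the inner infimum over alternative instances. -/
def gfun (S : Fin M → Finset (Fin K)) (v ω : Fin M → Fin K → ℝ) : ℝ :=
  sInf {x | ∃ v' ∈ AltSet S v,
    x = ∑ m : Fin M, ∑ i ∈ S m, ω m i * (v m i - v' m i) ^ 2 / 2}

/-- The gap `Δ_i(v)`. -/
def Delta (S : Fin M → Finset (Fin K)) (v : Fin M → Fin K → ℝ) (i : Fin K) : ℝ :=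
  sInf {x | ∃ m : Fin M, i ∈ S m ∧
    x = |armMean S v i - sSup {y | ∃ j ∈ S m, j ≠ i ∧ y = armMean S v j}|}

/-- The denominator `(1/M_i²) ∑_{m : i ∈ S_m} 1/ω_{i,m}`. -/
def armDenom (S : Fin M → Finset (Fin K)) (ω : Fin M → Fin K → ℝ) (i : Fin K) : ℝ :=
  (1 / (Mi S i : ℝ) ^ 2) * ∑ m ∈ Finset.univ.filter (fun m => i ∈ S m), 1 / ω m i

/-- The simplified objective `g̃_v(ω)`. -/
def gtilde (S : Fin M → Finset (Fin K)) (v ω : Fin M → Fin K → ℝ) : ℝ :=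
  if ∃ m, ∃ i ∈ S m, ω m i = 0 then 0
  else sInf {x | ∃ i : Fin K, x = (Delta S v i) ^ 2 / 2 / armDenom S ω i}

/-- The relation `R` on arms: two arms are related if some client has access to both. -/
def armRel (S : Fin M → Finset (Fin K)) (i₁ i₂ : Fin K) : Prop :=
  ∃ m, i₁ ∈ S m ∧ i₂ ∈ S m

/-- The equivalence class `Q` of arm `i` under the smallest equivalence relation
containing `R`. -/
def armClass (S : Fin M → Finset (Fin K)) (i : Fin K) : Set (Fin K) :=
  {i' | Relation.EqvGen (armRel S) i i'}

/-- Same equivalence class, as a `Finset`. -/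
def classFinset (S : Fin M → Finset (Fin K)) (i : Fin K) : Finset (Fin K) :=
  Finset.univ.filter fun i' => Relation.EqvGen (armRel S) i i'

/-- The per-class objective `g̃_v^{(j)}(ω)` where `Q` is the `j`-th equivalence class. -/
def gtildeC (S : Fin M → Finset (Fin K)) (v : Fin M → Fin K → ℝ) (Q : Set (Fin K))
    (ω : Fin M → Fin K → ℝ) : ℝ :=
  if ∃ m, ∃ i ∈ S m, i ∈ Q ∧ ω m i = 0 then 0
  else sInf {x | ∃ i ∈ Q, x = (Delta S v i) ^ 2 / armDenom S ω i}

/-- `ω` is a common solution: it simultaneously attains `max_{ω'∈Γ} g̃_v(ω')` and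
`max_{ω'∈Γ} g̃_v^{(j)}(ω')` for every equivalence class `Q_j`. -/
def IsCommonSol (S : Fin M → Finset (Fin K)) (v ω : Fin M → Fin K → ℝ) : Prop :=
  ω ∈ Gam S ∧ (∀ ω' ∈ Gam S, gtilde S v ω' ≤ gtilde S v ω) ∧
    ∀ i : Fin K, ∀ ω' ∈ Gam S,
      gtildeC S v (armClass S i) ω' ≤ gtildeC S v (armClass S i) ω

/-- The balanced condition. -/
def BalancedCond (S : Fin M → Finset (Fin K)) (ω : Fin M → Fin K → ℝ) : Prop :=
  ∀ m₁ m₂ : Fin M, ∀ i₁ i₂ : Fin K, i₁ ∈ S m₁ → i₂ ∈ S m₁ → i₁ ∈ S m₂ → i₂ ∈ S m₂ →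
    ω m₁ i₁ / ω m₁ i₂ = ω m₂ i₁ / ω m₂ i₂

/-- The pseudo-balanced condition for instance `v`. -/
def PseudoBalancedCond (S : Fin M → Finset (Fin K)) (v ω : Fin M → Fin K → ℝ) : Prop :=
  ∀ i₁ i₂ : Fin K, Relation.EqvGen (armRel S) i₁ i₂ →
    (Delta S v i₁) ^ 2 / armDenom S ω i₁ = (Delta S v i₂) ^ 2 / armDenom S ω i₂

/-- The matrix `H(v)` (restricted to a class it gives `H^{(j)}(v)`). -/
def Hmat (S : Fin M → Finset (Fin K)) (v : Fin M → Fin K → ℝ) (i₁ i₂ : Fin K) : ℝ :=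
  (1 / ((Delta S v i₁) ^ 2 * (Mi S i₁ : ℝ) ^ 2)) *
    ((Finset.univ.filter fun m => i₁ ∈ S m ∧ i₂ ∈ S m).card : ℝ)

/-! ### Auxiliary lemmas for Lemma 2 -/

section Aux

variable {K M : ℕ}

private lemma le_of_forall_pos_le_add' {a b : ℝ} (h : ∀ ε : ℝ, 0 < ε → a ≤ b + ε) :
    a ≤ b := by
  by_contra hab
  push_neg at hab
  have := h ((a - b) / 2) (by linarith)
  linarith

lemma Mi_pos (S : Fin M → Finset (Fin K)) {i : Fin K} (h : ∃ m, i ∈ S m) :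
    0 < Mi S i := by
  obtain ⟨m, hm⟩ := h
  exact Finset.card_pos.2 ⟨m, Finset.mem_filter.2 ⟨Finset.mem_univ m, hm⟩⟩

lemma erase_nonempty' {s : Finset (Fin K)} (hs : 2 ≤ s.card) (i : Fin K) :
    (s.erase i).Nonempty := by
  obtain ⟨a, ha, b, hb, hab⟩ := Finset.one_lt_card.1 hs
  rcases eq_or_ne a i with rfl | h
  · exact ⟨b, Finset.mem_erase.2 ⟨hab.symm, hb⟩⟩
  · exact ⟨a, Finset.mem_erase.2 ⟨h, ha⟩⟩

lemma bsupSet_eq (S : Fin M → Finset (Fin K)) (v : Fin M → Fin K → ℝ) (m : Fin M)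
    (i : Fin K) :
    {y | ∃ j ∈ S m, j ≠ i ∧ y = armMean S v j}
      = ↑(((S m).erase i).image (armMean S v)) := by
  ext y
  simp only [Set.mem_setOf_eq, Finset.coe_image, Set.mem_image, Finset.mem_coe,
    Finset.mem_erase]
  constructor
  · rintro ⟨j, hj, hne, rfl⟩; exact ⟨j, ⟨hne, hj⟩, rfl⟩
  · rintro ⟨j, ⟨hne, hj⟩, rfl⟩; exact ⟨j, hj, hne, rfl⟩

lemma bsup_eq_max' (S : Fin M → Finset (Fin K)) (v : Fin M → Fin K → ℝ) (m : Fin M)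
    (i : Fin K) (hne : ((S m).erase i).Nonempty) :
    sSup {y | ∃ j ∈ S m, j ≠ i ∧ y = armMean S v j}
      = (((S m).erase i).image (armMean S v)).max' (hne.image _) := by
  rw [bsupSet_eq]
  exact (hne.image _).csSup_eq_max'

/-- The defining finite set for `Delta`. -/
lemma deltaSet_eq (S : Fin M → Finset (Fin K)) (v : Fin M → Fin K → ℝ) (i : Fin K) :
    {x | ∃ m : Fin M, i ∈ S m ∧
        x = |armMean S v i - sSup {y | ∃ j ∈ S m, j ≠ i ∧ y = armMean S v j}|}
      = ↑((Finset.univ.filter fun m => i ∈ S m).image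
          (fun m => |armMean S v i - sSup {y | ∃ j ∈ S m, j ≠ i ∧ y = armMean S v j}|)) := by
  ext x
  simp only [Set.mem_setOf_eq, Finset.coe_image, Set.mem_image, Finset.mem_coe,
    Finset.mem_filter, Finset.mem_univ, true_and]
  constructor
  · rintro ⟨m, hm, rfl⟩; exact ⟨m, hm, rfl⟩
  · rintro ⟨m, hm, rfl⟩; exact ⟨m, hm, rfl⟩

lemma delta_le (S : Fin M → Finset (Fin K)) (v : Fin M → Fin K → ℝ) {i : Fin K}
    {m : Fin M} (hm : i ∈ S m) :
    Delta S v i ≤ |armMean S v i - sSup {y | ∃ j ∈ S m, j ≠ i ∧ y = armMean S v j}| := by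
  have hne : ((Finset.univ.filter fun m => i ∈ S m).image
      (fun m => |armMean S v i - sSup {y | ∃ j ∈ S m, j ≠ i ∧ y = armMean S v j}|)).Nonempty :=
    Finset.Nonempty.image ⟨m, Finset.mem_filter.2 ⟨Finset.mem_univ m, hm⟩⟩ _
  rw [Delta, deltaSet_eq, hne.csInf_eq_min']
  exact Finset.min'_le _ _ (Finset.mem_image_of_mem _
    (Finset.mem_filter.2 ⟨Finset.mem_univ m, hm⟩))

lemma delta_exists (S : Fin M → Finset (Fin K)) (v : Fin M → Fin K → ℝ) {i : Fin K}
    (h : ∃ m, i ∈ S m) :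
    ∃ m : Fin M, i ∈ S m ∧
      Delta S v i = |armMean S v i - sSup {y | ∃ j ∈ S m, j ≠ i ∧ y = armMean S v j}| := by
  obtain ⟨m, hm⟩ := h
  have hne : ((Finset.univ.filter fun m => i ∈ S m).image
      (fun m => |armMean S v i - sSup {y | ∃ j ∈ S m, j ≠ i ∧ y = armMean S v j}|)).Nonempty :=
    Finset.Nonempty.image ⟨m, Finset.mem_filter.2 ⟨Finset.mem_univ m, hm⟩⟩ _
  rw [Delta, deltaSet_eq, hne.csInf_eq_min']
  have hmem := Finset.min'_mem _ hne
  rw [Finset.mem_image] at hmem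
  obtain ⟨m', hm', heq⟩ := hmem
  exact ⟨m', (Finset.mem_filter.1 hm').2, heq.symm⟩

lemma delta_nonneg (S : Fin M → Finset (Fin K)) (v : Fin M → Fin K → ℝ) {i : Fin K}
    (h : ∃ m, i ∈ S m) : 0 ≤ Delta S v i := by
  obtain ⟨m, _, heq⟩ := delta_exists S v h
  rw [heq]; exact abs_nonneg _

/-- Computing the arm mean after a per-client shift of arm `k`. -/
lemma armMean_shift (S : Fin M → Finset (Fin K)) {v v' : Fin M → Fin K → ℝ} (k : Fin K)
    (d : Fin M → ℝ) (h : ∀ m, v' m k = v m k + d m) :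
    armMean S v' k = armMean S v k
      + (1 / (Mi S k : ℝ)) * ∑ m ∈ Finset.univ.filter (fun m => k ∈ S m), d m := by
  unfold armMean
  rw [Finset.sum_congr rfl (fun m _ => h m), Finset.sum_add_distrib, mul_add]

/-- Computing the arm mean after a constant shift of arm `k`. -/
lemma armMean_shift_const (S : Fin M → Finset (Fin K)) {v v' : Fin M → Fin K → ℝ}
    (k : Fin K) (hk : 0 < Mi S k) (c : ℝ) (h : ∀ m, v' m k = v m k + c) :
    armMean S v' k = armMean S v k + c := by
  rw [armMean_shift S k (fun _ => c) h, Finset.sum_const]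
  have hMi : ((Mi S k : ℝ)) ≠ 0 := Nat.cast_ne_zero.2 hk.ne'
  rw [Mi] at hMi ⊢
  rw [nsmul_eq_mul]
  field_simp

/-- Cauchy–Schwarz: lower bound on the transportation cost of one arm. -/
lemma cost_ge (S : Fin M → Finset (Fin K)) (i : Fin K) {ω : Fin M → Fin K → ℝ}
    (v v' : Fin M → Fin K → ℝ) (hpos : ∀ m, i ∈ S m → 0 < ω m i)
    (hcov : ∃ m, i ∈ S m) :
    (armMean S v i - armMean S v' i) ^ 2 / (2 * armDenom S ω i)
      ≤ ∑ m ∈ Finset.univ.filter (fun m => i ∈ S m), ω m i * (v m i - v' m i) ^ 2 / 2 := by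
  classical
  set F := Finset.univ.filter (fun m => i ∈ S m) with hF
  obtain ⟨m₀, hm₀⟩ := hcov
  have hm₀F : m₀ ∈ F := Finset.mem_filter.2 ⟨Finset.mem_univ _, hm₀⟩
  have hposF : ∀ m ∈ F, 0 < ω m i := fun m hm => hpos m (Finset.mem_filter.1 hm).2
  have hW : 0 < ∑ m ∈ F, 1 / ω m i :=
    Finset.sum_pos (fun m hm => one_div_pos.2 (hposF m hm)) ⟨m₀, hm₀F⟩
  have hMi : (0 : ℝ) < (Mi S i : ℝ) := by
    exact_mod_cast Mi_pos S ⟨m₀, hm₀⟩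
  set d : Fin M → ℝ := fun m => v m i - v' m i with hd
  have hcs := Finset.sq_sum_div_le_sum_sq_div F d
    (g := fun m => 1 / ω m i) (fun m hm => one_div_pos.2 (hposF m hm))
  have hterm : ∀ m ∈ F, d m ^ 2 / (1 / ω m i) = ω m i * d m ^ 2 := by
    intro m hm
    rw [one_div, div_inv_eq_mul]
    ring
  rw [Finset.sum_congr rfl hterm] at hcs
  have hdiff : armMean S v i - armMean S v' i = (1 / (Mi S i : ℝ)) * ∑ m ∈ F, d m := by
    unfold armMean
    rw [← mul_sub, ← Finset.sum_sub_distrib]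
  have hsum2 : ∑ m ∈ F, ω m i * d m ^ 2 / 2 = (∑ m ∈ F, ω m i * d m ^ 2) / 2 := by
    rw [Finset.sum_div]
  rw [hsum2, hdiff, armDenom, ← hF]
  have hcs' : (∑ m ∈ F, d m) ^ 2 ≤ (∑ m ∈ F, ω m i * d m ^ 2) * (∑ m ∈ F, 1 / ω m i) := by
    rw [div_le_iff₀ hW] at hcs
    linarith
  rw [div_le_div_iff₀ (by positivity) (by norm_num)]
  have hexp : ((1 / (Mi S i : ℝ)) * ∑ m ∈ F, d m) ^ 2 * 2
      = (∑ m ∈ F, d m) ^ 2 * (2 / (Mi S i : ℝ) ^ 2) := by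
    field_simp
  rw [hexp]
  have h2 : (∑ m ∈ F, d m) ^ 2 * (2 / (Mi S i : ℝ) ^ 2)
      ≤ ((∑ m ∈ F, ω m i * d m ^ 2) * (∑ m ∈ F, 1 / ω m i)) * (2 / (Mi S i : ℝ) ^ 2) := by
    apply mul_le_mul_of_nonneg_right hcs' (by positivity)
  refine h2.trans_eq ?_
  field_simp

/-- The total cost dominates the cost of two distinct arms. -/
lemma total_ge_two (S : Fin M → Finset (Fin K)) (ω v v' : Fin M → Fin K → ℝ)
    (hω0 : ∀ m, ∀ k ∈ S m, 0 ≤ ω m k) {i j : Fin K} (hij : i ≠ j) :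
    (∑ m ∈ Finset.univ.filter (fun m => i ∈ S m), ω m i * (v m i - v' m i) ^ 2 / 2)
    + (∑ m ∈ Finset.univ.filter (fun m => j ∈ S m), ω m j * (v m j - v' m j) ^ 2 / 2)
      ≤ ∑ m : Fin M, ∑ k ∈ S m, ω m k * (v m k - v' m k) ^ 2 / 2 := by
  classical
  set t : Fin M → Fin K → ℝ := fun m k => ω m k * (v m k - v' m k) ^ 2 / 2 with ht
  have hper : ∀ m : Fin M,
      (if i ∈ S m then t m i else 0) + (if j ∈ S m then t m j else 0)
        ≤ ∑ k ∈ S m, t m k := by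
    intro m
    have hsubset : ({i, j} : Finset (Fin K)).filter (fun k => k ∈ S m) ⊆ S m := by
      intro k hk; exact (Finset.mem_filter.1 hk).2
    have hle := Finset.sum_le_sum_of_subset_of_nonneg (f := t m) hsubset
      (fun k hk _ => by
        have : 0 ≤ ω m k := hω0 m k hk
        positivity)
    calc (if i ∈ S m then t m i else 0) + (if j ∈ S m then t m j else 0)
        = ∑ k ∈ ({i, j} : Finset (Fin K)), if k ∈ S m then t m k else 0 := by
          rw [Finset.sum_pair hij]
      _ = ∑ k ∈ ({i, j} : Finset (Fin K)).filter (fun k => k ∈ S m), t m k := by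
          rw [Finset.sum_filter]
      _ ≤ ∑ k ∈ S m, t m k := hle
  calc (∑ m ∈ Finset.univ.filter (fun m => i ∈ S m), t m i)
        + (∑ m ∈ Finset.univ.filter (fun m => j ∈ S m), t m j)
      = ∑ m : Fin M, ((if i ∈ S m then t m i else 0) + (if j ∈ S m then t m j else 0)) := by
        rw [Finset.sum_add_distrib, Finset.sum_filter, Finset.sum_filter]
    _ ≤ ∑ m : Fin M, ∑ k ∈ S m, t m k := Finset.sum_le_sum (fun m _ => hper m)

lemma isBest_unique (S : Fin M → Finset (Fin K)) (v : Fin M → Fin K → ℝ) {m : Fin M}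
    {b b' : Fin K} (hb : isBest S v m b) (hb' : isBest S v m b') : b = b' := by
  by_contra h
  have h1 := hb.2 b' hb'.1 (Ne.symm h)
  have h2 := hb'.2 b hb.1 h
  linarith

end Aux
section Construction

variable {K M : ℕ}

set_option maxHeartbeats 1600000 in
/-- Key construction: upper bound on elements of the `gfun` infimum set. -/
lemma gfun_upper (S : Fin M → Finset (Fin K))
    (hS : ∀ m, 2 ≤ (S m).card) (hcov : ∀ i : Fin K, ∃ m, i ∈ S m)
    (v : Fin M → Fin K → ℝ) (hv : v ∈ PSet S)
    (ω : Fin M → Fin K → ℝ) (hω : ω ∈ Gam S)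
    (i : Fin K) (Λ : ℝ) (hΛ : 0 ≤ Λ)
    (hd : ∀ T : ℝ, ∃ d : Fin M → ℝ,
      (∑ m ∈ Finset.univ.filter (fun m => i ∈ S m), d m) = (Mi S i : ℝ) * T ∧
      (∑ m ∈ Finset.univ.filter (fun m => i ∈ S m), ω m i * (d m) ^ 2 / 2) ≤ Λ * T ^ 2)
    {ε' : ℝ} (hε' : 0 < ε') :
    ∃ x ∈ {x | ∃ v' ∈ AltSet S v,
        x = ∑ m : Fin M, ∑ k ∈ S m, ω m k * (v m k - v' m k) ^ 2 / 2},
      x ≤ Λ * (Delta S v i) ^ 2 + ε' := by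
  classical
  set F := Finset.univ.filter (fun m => i ∈ S m) with hF
  have hcovi := hcov i
  have hMipos : 0 < Mi S i := Mi_pos S hcovi
  have hMiR : (0:ℝ) < (Mi S i : ℝ) := by exact_mod_cast hMipos
  set μ := armMean S v with hμ
  obtain ⟨ms, hms, hΔeq⟩ := delta_exists S v hcovi
  have hEne : ((S ms).erase i).Nonempty := erase_nonempty' (hS ms) i
  have hEne' : (((S ms).erase i).image μ).Nonempty := hEne.image _
  set B := (((S ms).erase i).image μ).max' hEne' with hB
  have hBsup : sSup {y | ∃ j ∈ S ms, j ≠ i ∧ y = armMean S v j} = B :=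
    bsup_eq_max' S v ms i hEne
  have hΔB : Delta S v i = |μ i - B| := by rw [hΔeq, hBsup, hμ]
  have hBle : ∀ j ∈ (S ms).erase i, μ j ≤ B := fun j hj =>
    Finset.le_max' _ _ (Finset.mem_image_of_mem _ hj)
  obtain ⟨j₀, hj₀, hj₀B⟩ : ∃ j ∈ (S ms).erase i, μ j = B := by
    have hmem := Finset.max'_mem (((S ms).erase i).image μ) hEne'
    rw [Finset.mem_image] at hmem
    obtain ⟨j, hj, hjeq⟩ := hmem
    exact ⟨j, hj, hjeq⟩
  have hcase : (B < μ i ∧ isBest S v ms i) ∨ (μ i < B ∧ ∃ b, isBest S v ms b ∧ b ≠ i) := by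
    obtain ⟨b, hb⟩ := hv ms
    by_cases hbi : b = i
    · subst hbi
      left
      refine ⟨?_, hb⟩
      have hj₀' := Finset.mem_erase.1 hj₀
      have h1 := hb.2 j₀ hj₀'.2 hj₀'.1
      rw [← hμ] at h1
      rw [← hj₀B]
      exact h1
    · right
      have h1 : μ i < μ b := hb.2 i hms (fun h => hbi h.symm)
      have h2 : μ b ≤ B := hBle b (Finset.mem_erase.2 ⟨hbi, hb.1⟩)
      exact ⟨lt_of_lt_of_le h1 h2, b, hb, hbi⟩
  set Δ := Delta S v i with hΔdef
  have hΔ0 : 0 ≤ Δ := delta_nonneg S v hcovi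
  set C : ℝ := (M : ℝ) * ((K : ℝ) + 2) ^ 2 / 2 with hC
  have hC0 : 0 ≤ C := by positivity
  have hDpos : 0 < Λ * (2 * Δ + 1) + C + 1 := by nlinarith
  set ε₀ := min 1 (ε' / (Λ * (2 * Δ + 1) + C + 1)) with hε₀
  have hε₀pos : 0 < ε₀ := lt_min one_pos (div_pos hε' hDpos)
  have hfinal : ∀ ε : ℝ, 0 < ε → ε < ε₀ →
      Λ * (Δ + ε) ^ 2 + C * ε ^ 2 ≤ Λ * Δ ^ 2 + ε' := by
    intro ε hεpos hεlt
    have hεle1 : ε ≤ 1 := le_of_lt (lt_of_lt_of_le hεlt (min_le_left _ _))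
    have h2 : ε < ε' / (Λ * (2 * Δ + 1) + C + 1) := lt_of_lt_of_le hεlt (min_le_right _ _)
    have hεle2 : ε * (Λ * (2 * Δ + 1) + C + 1) ≤ ε' := by
      rw [lt_div_iff₀ hDpos] at h2
      linarith
    nlinarith [mul_nonneg hΛ (mul_nonneg hεpos.le (sub_nonneg.2 hεle1)),
      mul_nonneg hC0 (mul_nonneg hεpos.le (sub_nonneg.2 hεle1))]
  -- the common construction
  have main : ∀ σ : ℝ, σ = 1 ∨ σ = -1 →
      ∃ ε : ℝ, 0 < ε ∧ ε < ε₀ ∧ ∃ v' : Fin M → Fin K → ℝ, v' ∈ PSet S ∧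
        armMean S v' i = B + σ * ε ∧
        (∀ k : Fin K, k ≠ i → armMean S v' k = μ k - σ * ((k.val : ℝ) + 2) * ε) ∧
        (∑ m : Fin M, ∑ k ∈ S m, ω m k * (v m k - v' m k) ^ 2 / 2)
          ≤ Λ * (B + σ * ε - μ i) ^ 2 + C * ε ^ 2 := by
    intro σ hσ
    have hσ0 : σ ≠ 0 := by rcases hσ with h | h <;> rw [h] <;> norm_num
    have hσsq : σ ^ 2 = 1 := by rcases hσ with h | h <;> rw [h] <;> norm_num
    set sl : Fin K → ℝ := fun k => if k = i then σ else -σ * ((k.val : ℝ) + 2) with hsl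
    set bs : Fin K → ℝ := fun k => if k = i then B else μ k with hbs
    have hslne : ∀ k l : Fin K, k ≠ l → sl k ≠ sl l := by
      intro k l hkl heq
      simp only [hsl] at heq
      by_cases hk : k = i <;> by_cases hl : l = i
      · exact hkl (hk.trans hl.symm)
      · rw [if_pos hk, if_neg hl] at heq
        have h1 : σ * (1 + ((l.val : ℝ) + 2)) = 0 := by linear_combination heq
        rcases mul_eq_zero.1 h1 with h | h
        · exact hσ0 h
        · have : (0:ℝ) ≤ (l.val : ℝ) := Nat.cast_nonneg _
          linarith
      · rw [if_neg hk, if_pos hl] at heq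
        have h1 : σ * (1 + ((k.val : ℝ) + 2)) = 0 := by linear_combination -heq
        rcases mul_eq_zero.1 h1 with h | h
        · exact hσ0 h
        · have : (0:ℝ) ≤ (k.val : ℝ) := Nat.cast_nonneg _
          linarith
      · rw [if_neg hk, if_neg hl] at heq
        have h1 : σ * (((l.val : ℝ)) - ((k.val : ℝ))) = 0 := by linear_combination heq
        rcases mul_eq_zero.1 h1 with h | h
        · exact hσ0 h
        · have hval : (k.val : ℝ) = (l.val : ℝ) := by linarith
          exact hkl (Fin.ext (Nat.cast_injective hval))
    set φ : Fin K → ℝ → ℝ := fun k ε => bs k + sl k * ε with hφ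
    set bad : Set ℝ := {ε | ∃ k l : Fin K, k ≠ l ∧ φ k ε = φ l ε} with hbad
    have hbadfin : bad.Finite := by
      have hsub : bad ⊆ ⋃ (p : Fin K × Fin K), {ε | p.1 ≠ p.2 ∧ φ p.1 ε = φ p.2 ε} := by
        rintro ε ⟨k, l, hkl, he⟩
        exact Set.mem_iUnion.2 ⟨(k, l), hkl, he⟩
      refine Set.Finite.subset (Set.finite_iUnion fun p => ?_) hsub
      apply Set.Subsingleton.finite
      rintro x ⟨hne, hx⟩ y ⟨-, hy⟩
      have hc : (sl p.1 - sl p.2) * x = (sl p.1 - sl p.2) * y := by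
        simp only [hφ] at hx hy
        linear_combination hx - hy
      exact mul_left_cancel₀ (sub_ne_zero.2 (hslne _ _ hne)) hc
    obtain ⟨ε, hεmem⟩ := ((Set.Ioo_infinite hε₀pos).diff hbadfin).nonempty
    obtain ⟨hεI, hεnb⟩ := hεmem
    have hεpos : 0 < ε := hεI.1
    have hεlt : ε < ε₀ := hεI.2
    set T := B + σ * ε - μ i with hT
    obtain ⟨d, hdsum, hdcost⟩ := hd T
    set v' : Fin M → Fin K → ℝ := fun m k =>
      if k = i then v m k + d m else v m k - σ * ((k.val : ℝ) + 2) * ε with hv'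
    have harmi : armMean S v' i = B + σ * ε := by
      rw [armMean_shift S (v := v) (v' := v') i d (fun m => by simp only [hv', if_pos rfl])]
      rw [← hF, hdsum, ← hμ]
      have hinv : (1 / (Mi S i : ℝ)) * ((Mi S i : ℝ) * T) = T := by
        field_simp
      rw [hinv, hT]
      ring
    have harmk : ∀ k : Fin K, k ≠ i → armMean S v' k = μ k - σ * ((k.val:ℝ)+2) * ε := by
      intro k hk
      have hconst := armMean_shift_const S (v := v) (v' := v') k (Mi_pos S (hcov k))
        (-(σ * ((k.val:ℝ)+2) * ε))
        (fun m => by simp only [hv', if_neg hk]; ring)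
      rw [hconst, ← hμ]
      ring
    have harmφ : ∀ k : Fin K, armMean S v' k = φ k ε := by
      intro k
      by_cases hk : k = i
      · subst hk
        rw [harmi]
        simp [hφ, hbs, hsl]
      · rw [harmk k hk]
        simp only [hφ, hbs, hsl, if_neg hk]
        ring
    have hinj : ∀ k l : Fin K, k ≠ l → armMean S v' k ≠ armMean S v' l := by
      intro k l hkl heq
      exact hεnb ⟨k, l, hkl, by rw [← harmφ, ← harmφ]; exact heq⟩
    have hP : v' ∈ PSet S := by
      intro m
      have hne : (S m).Nonempty := Finset.card_pos.1 (lt_of_lt_of_le two_pos (hS m))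
      obtain ⟨k, hk, hmax⟩ := Finset.exists_max_image (S m) (armMean S v') hne
      exact ⟨k, hk, fun j hj hjk => lt_of_le_of_ne (hmax j hj) (hinj j k hjk)⟩
    have hcost : (∑ m : Fin M, ∑ k ∈ S m, ω m k * (v m k - v' m k) ^ 2 / 2)
        ≤ Λ * T ^ 2 + C * ε ^ 2 := by
      have hper : ∀ m : Fin M, ∑ k ∈ S m, ω m k * (v m k - v' m k) ^ 2 / 2
          ≤ (if i ∈ S m then ω m i * (d m) ^ 2 / 2 else 0)
            + ((K : ℝ) + 2) ^ 2 * ε ^ 2 / 2 := by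
        intro m
        have hbound : ∀ k ∈ S m, k ≠ i →
            ω m k * (v m k - v' m k) ^ 2 / 2 ≤ ω m k * (((K:ℝ)+2)^2 * ε^2) / 2 := by
          intro k hk hki
          have hvk : v m k - v' m k = σ * ((k.val:ℝ)+2) * ε := by
            simp only [hv', if_neg hki]; ring
          rw [hvk]
          have hω0 : 0 ≤ ω m k := hω.1 m k hk
          have hkK : ((k.val:ℝ)) ≤ (K:ℝ) := by exact_mod_cast (le_of_lt k.isLt)
          have hsq : (σ * ((k.val:ℝ)+2) * ε)^2 ≤ ((K:ℝ)+2)^2 * ε^2 := by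
            have h1 : (σ * ((k.val:ℝ)+2) * ε)^2 = ((k.val:ℝ)+2)^2 * ε^2 := by
              rw [mul_pow, mul_pow, hσsq]; ring
            rw [h1]
            have hk0 : (0:ℝ) ≤ (k.val : ℝ) := Nat.cast_nonneg _
            have h2 : ((k.val:ℝ)+2)^2 ≤ ((K:ℝ)+2)^2 := by nlinarith
            exact mul_le_mul_of_nonneg_right h2 (sq_nonneg ε)
          have := mul_le_mul_of_nonneg_left hsq hω0
          linarith
        have herase : ∀ (s : Finset (Fin K)), (∀ k ∈ s, k ∈ S m ∧ k ≠ i) →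
            ∑ k ∈ s, ω m k * (v m k - v' m k) ^ 2 / 2 ≤ ((K:ℝ)+2)^2 * ε^2 / 2 := by
          intro s hs
          calc ∑ k ∈ s, ω m k * (v m k - v' m k) ^ 2 / 2
              ≤ ∑ k ∈ s, ω m k * (((K:ℝ)+2)^2 * ε^2) / 2 :=
                Finset.sum_le_sum (fun k hk => hbound k (hs k hk).1 (hs k hk).2)
            _ = (((K:ℝ)+2)^2 * ε^2 / 2) * ∑ k ∈ s, ω m k := by
                rw [Finset.mul_sum]
                exact Finset.sum_congr rfl (fun k _ => by ring)
            _ ≤ (((K:ℝ)+2)^2 * ε^2 / 2) * 1 := by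
                apply mul_le_mul_of_nonneg_left _ (by positivity)
                rw [← (hω.2.1 m)]
                exact Finset.sum_le_sum_of_subset_of_nonneg
                  (fun k hk => (hs k hk).1) (fun k hk _ => hω.1 m k hk)
            _ = ((K:ℝ)+2)^2 * ε^2 / 2 := mul_one _
        by_cases him : i ∈ S m
        · rw [if_pos him, ← Finset.add_sum_erase _ _ him]
          have hi' : ω m i * (v m i - v' m i) ^ 2 / 2 = ω m i * d m ^ 2 / 2 := by
            have hvi : v m i - v' m i = -d m := by
              simp only [hv', if_pos rfl]; ring
            rw [hvi]; ring
          rw [hi']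
          have := herase ((S m).erase i) (fun k hk =>
            ⟨(Finset.mem_erase.1 hk).2, (Finset.mem_erase.1 hk).1⟩)
          linarith
        · rw [if_neg him, zero_add]
          exact herase (S m) (fun k hk => ⟨hk, fun h => him (h ▸ hk)⟩)
      calc (∑ m : Fin M, ∑ k ∈ S m, ω m k * (v m k - v' m k) ^ 2 / 2)
          ≤ ∑ m : Fin M, ((if i ∈ S m then ω m i * (d m) ^ 2 / 2 else 0)
              + ((K:ℝ)+2)^2 * ε^2 / 2) := Finset.sum_le_sum (fun m _ => hper m)
        _ = (∑ m ∈ F, ω m i * (d m) ^ 2 / 2) + (M : ℝ) * (((K:ℝ)+2)^2 * ε^2 / 2) := by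
            rw [Finset.sum_add_distrib, ← Finset.sum_filter, Finset.sum_const,
              Finset.card_univ, Fintype.card_fin, nsmul_eq_mul]
        _ ≤ Λ * T ^ 2 + C * ε ^ 2 := by
            rw [hC]
            have : (M : ℝ) * (((K:ℝ)+2)^2 * ε^2 / 2)
                = (M : ℝ) * ((K:ℝ)+2)^2 / 2 * ε^2 := by ring
            rw [this]
            linarith [hdcost]
    exact ⟨ε, hεpos, hεlt, v', hP, harmi, harmk, hcost⟩
  rcases hcase with ⟨hBlt, hbest⟩ | ⟨hBgt, b, hb, hbi⟩
  · -- i is the best arm at ms: push it below B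
    obtain ⟨ε, hεpos, hεlt, v', hP, harmi, harmk, hcost⟩ := main (-1) (Or.inr rfl)
    have hAlt : v' ∈ AltSet S v := by
      refine ⟨hP, fun hall => ?_⟩
      have hbest' := (hall ms i).1 hbest
      have hj₀i : j₀ ≠ i := (Finset.mem_erase.1 hj₀).1
      have h1 := hbest'.2 j₀ (Finset.mem_erase.1 hj₀).2 hj₀i
      rw [harmi, harmk j₀ hj₀i, hj₀B] at h1
      have hj00 : (0:ℝ) ≤ (j₀.val : ℝ) := Nat.cast_nonneg _
      nlinarith
    refine ⟨_, ⟨v', hAlt, rfl⟩, ?_⟩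
    have hΔval : Δ = μ i - B := by
      rw [hΔB]
      exact abs_of_pos (by linarith)
    have hT2 : (B + (-1) * ε - μ i) ^ 2 = (Δ + ε) ^ 2 := by rw [hΔval]; ring
    rw [hT2] at hcost
    exact hcost.trans (hfinal ε hεpos hεlt)
  · -- i is not best at ms: push it above B
    obtain ⟨ε, hεpos, hεlt, v', hP, harmi, harmk, hcost⟩ := main 1 (Or.inl rfl)
    have hbest' : isBest S v' ms i := by
      refine ⟨hms, fun j hj hji => ?_⟩
      rw [harmi, harmk j hji]
      have hjB : μ j ≤ B := hBle j (Finset.mem_erase.2 ⟨hji, hj⟩)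
      have hj0 : (0:ℝ) ≤ (j.val : ℝ) := Nat.cast_nonneg _
      nlinarith
    have hAlt : v' ∈ AltSet S v := by
      refine ⟨hP, fun hall => ?_⟩
      have hbb := (hall ms b).1 hb
      have h1 := hbb.2 i hms (fun h => hbi h.symm)
      have h2 := hbest'.2 b hb.1 hbi
      linarith
    refine ⟨_, ⟨v', hAlt, rfl⟩, ?_⟩
    have hΔval : Δ = B - μ i := by
      rw [hΔB, abs_of_neg (show μ i - B < 0 by linarith)]
      ring
    have hT2 : (B + 1 * ε - μ i) ^ 2 = (Δ + ε) ^ 2 := by rw [hΔval]; ring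
    rw [hT2] at hcost
    exact hcost.trans (hfinal ε hεpos hεlt)

end Construction
set_option maxHeartbeats 1600000 in
/-- Lemma 2: for `v ∈ P` and `ω ∈ Γ`, `(1/2)·g̃_v(ω) ≤ g_v(ω) ≤ g̃_v(ω)`. -/
theorem stmt0 (K M : ℕ) (hK : 2 ≤ K) (hM : 1 ≤ M) (S : Fin M → Finset (Fin K))
    (hS : ∀ m, 2 ≤ (S m).card) (hcov : ∀ i : Fin K, ∃ m, i ∈ S m)
    (v : Fin M → Fin K → ℝ) (hv : v ∈ PSet S)
    (ω : Fin M → Fin K → ℝ) (hω : ω ∈ Gam S) :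
    (1 / 2) * gtilde S v ω ≤ gfun S v ω ∧ gfun S v ω ≤ gtilde S v ω := by
  classical
  have hK0 : 0 < K := by omega
  set gset := {x | ∃ v' ∈ AltSet S v,
      x = ∑ m : Fin M, ∑ i ∈ S m, ω m i * (v m i - v' m i) ^ 2 / 2} with hgset
  have hgfun : gfun S v ω = sInf gset := rfl
  have hchar : ∀ x ∈ gset, 0 ≤ x := by
    rintro x ⟨v', hv', rfl⟩
    apply Finset.sum_nonneg; intro m _
    apply Finset.sum_nonneg; intro k hk
    have h0 := hω.1 m k hk
    positivity
  have hbdd : BddBelow gset := ⟨0, fun x hx => hchar x hx⟩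
  by_cases hdeg : ∃ m, ∃ i ∈ S m, ω m i = 0
  · -- degenerate case: some weight vanishes, so gtilde = 0 and gfun = 0
    obtain ⟨m₀, i₀, hi₀, hω0⟩ := hdeg
    have hgt : gtilde S v ω = 0 := by
      rw [gtilde, if_pos ⟨m₀, i₀, hi₀, hω0⟩]
    have hub : ∀ ε' : ℝ, 0 < ε' → ∃ x ∈ gset, x ≤ 0 * (Delta S v i₀) ^ 2 + ε' := by
      intro ε' hε'
      apply gfun_upper S hS hcov v hv ω hω i₀ 0 le_rfl ?_ hε'
      intro T
      refine ⟨fun m => if m = m₀ then (Mi S i₀ : ℝ) * T else 0, ?_, ?_⟩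
      · rw [Finset.sum_ite_eq' (Finset.univ.filter (fun m => i₀ ∈ S m)) m₀
          (fun _ => (Mi S i₀ : ℝ) * T)]
        simp [hi₀]
      · have hzero : (∑ m ∈ Finset.univ.filter (fun m => i₀ ∈ S m),
            ω m i₀ * (if m = m₀ then (Mi S i₀ : ℝ) * T else 0) ^ 2 / 2) = 0 := by
          apply Finset.sum_eq_zero
          intro m _
          by_cases h : m = m₀
          · subst h; rw [hω0]; ring
          · rw [if_neg h]; ring
        rw [hzero]
        nlinarith [sq_nonneg T]
    have hne : gset.Nonempty := by
      obtain ⟨x, hx, -⟩ := hub 1 one_pos; exact ⟨x, hx⟩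
    have h1 : gfun S v ω ≤ 0 := by
      apply le_of_forall_pos_le_add'
      intro ε' hε'
      obtain ⟨x, hx, hxle⟩ := hub ε' hε'
      calc gfun S v ω ≤ x := csInf_le hbdd hx
        _ ≤ 0 * (Delta S v i₀) ^ 2 + ε' := hxle
        _ = 0 + ε' := by ring
    have h0 : 0 ≤ gfun S v ω := le_csInf hne hchar
    rw [hgt]
    constructor <;> linarith
  · -- nondegenerate case
    push_neg at hdeg
    have hpos : ∀ m, ∀ i ∈ S m, 0 < ω m i := fun m i hi =>
      lt_of_le_of_ne (hω.1 m i hi) (Ne.symm (hdeg m i hi))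
    have hden : ∀ i : Fin K, 0 < armDenom S ω i := by
      intro i
      obtain ⟨m, hm⟩ := hcov i
      have hMi : (0:ℝ) < (Mi S i : ℝ) := by exact_mod_cast Mi_pos S ⟨m, hm⟩
      have hW : 0 < ∑ m' ∈ Finset.univ.filter (fun m' => i ∈ S m'), 1 / ω m' i :=
        Finset.sum_pos (fun m' hm' => one_div_pos.2 (hpos m' i (Finset.mem_filter.1 hm').2))
          ⟨m, Finset.mem_filter.2 ⟨Finset.mem_univ _, hm⟩⟩
      rw [armDenom]
      positivity
    have hgt : gtilde S v ω
        = sInf {x | ∃ i : Fin K, x = (Delta S v i) ^ 2 / 2 / armDenom S ω i} := by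
      rw [gtilde, if_neg]
      push_neg
      exact fun m i hi => hdeg m i hi
    have hgtbdd : BddBelow {x | ∃ i : Fin K, x = (Delta S v i) ^ 2 / 2 / armDenom S ω i} := by
      have hrange : {x | ∃ i : Fin K, x = (Delta S v i) ^ 2 / 2 / armDenom S ω i}
          = Set.range (fun i : Fin K => (Delta S v i) ^ 2 / 2 / armDenom S ω i) := by
        ext x; simp [eq_comm, Set.range]
      rw [hrange]
      exact (Set.finite_range _).bddBelow
    have hgtne : {x | ∃ i : Fin K, x = (Delta S v i) ^ 2 / 2 / armDenom S ω i}.Nonempty :=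
      ⟨_, ⟨(⟨0, hK0⟩ : Fin K), rfl⟩⟩
    -- upper bound for each arm
    have hub : ∀ i : Fin K, ∀ ε' : ℝ, 0 < ε' →
        ∃ x ∈ gset, x ≤ (1 / (2 * armDenom S ω i)) * (Delta S v i) ^ 2 + ε' := by
      intro i ε' hε'
      have h2A : 0 < 2 * armDenom S ω i := by linarith [hden i]
      have hΛ : (0:ℝ) ≤ 1 / (2 * armDenom S ω i) := (one_div_pos.2 h2A).le
      apply gfun_upper S hS hcov v hv ω hω i _ hΛ ?_ hε'
      intro T
      obtain ⟨m, hm⟩ := hcov i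
      have hMi : (0:ℝ) < (Mi S i : ℝ) := by exact_mod_cast Mi_pos S ⟨m, hm⟩
      set W := ∑ m' ∈ Finset.univ.filter (fun m' => i ∈ S m'), 1 / ω m' i with hW
      have hWpos : 0 < W :=
        Finset.sum_pos (fun m' hm' => one_div_pos.2 (hpos m' i (Finset.mem_filter.1 hm').2))
          ⟨m, Finset.mem_filter.2 ⟨Finset.mem_univ _, hm⟩⟩
      have hW0 : W ≠ 0 := hWpos.ne'
      have hMi0 : (Mi S i : ℝ) ≠ 0 := hMi.ne'
      refine ⟨fun m' => ((Mi S i : ℝ) * T / W) * (1 / ω m' i), ?_, ?_⟩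
      · rw [← Finset.mul_sum, ← hW]
        field_simp
      · have hsum : (∑ m' ∈ Finset.univ.filter (fun m' => i ∈ S m'),
            ω m' i * (((Mi S i : ℝ) * T / W) * (1 / ω m' i)) ^ 2 / 2)
              = (((Mi S i : ℝ) * T / W) ^ 2 / 2) * W := by
          rw [hW, Finset.mul_sum]
          refine Finset.sum_congr rfl (fun m' hm' => ?_)
          have hωm := (hpos m' i (Finset.mem_filter.1 hm').2).ne'
          field_simp
        rw [hsum]
        apply le_of_eq
        rw [armDenom, ← hW]
        field_simp
    have hne : gset.Nonempty := by
      obtain ⟨x, hx, -⟩ := hub ⟨0, hK0⟩ 1 one_pos; exact ⟨x, hx⟩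
    have hgfun_le : ∀ i : Fin K, gfun S v ω ≤ (Delta S v i) ^ 2 / 2 / armDenom S ω i := by
      intro i
      have heq : (1 / (2 * armDenom S ω i)) * (Delta S v i) ^ 2
          = (Delta S v i) ^ 2 / 2 / armDenom S ω i := by
        have := (hden i).ne'
        field_simp
      rw [← heq]
      apply le_of_forall_pos_le_add'
      intro ε' hε'
      obtain ⟨x, hx, hxle⟩ := hub i ε' hε'
      exact (csInf_le hbdd hx).trans hxle
    have hUB : gfun S v ω ≤ gtilde S v ω := by
      rw [hgt]
      apply le_csInf hgtne
      rintro x ⟨i, rfl⟩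
      exact hgfun_le i
    -- lower bound
    have hLB : (1 / 2) * gtilde S v ω ≤ gfun S v ω := by
      rw [hgfun]
      apply le_csInf hne
      rintro x ⟨v', ⟨hP', hnall⟩, rfl⟩
      push_neg at hnall
      obtain ⟨m, k, hk⟩ := hnall
      obtain ⟨bi, hbi⟩ := hv m
      obtain ⟨bj, hbj⟩ := hP' m
      have hij : bi ≠ bj := by
        intro h
        subst h
        rcases hk with ⟨h1, h2⟩ | ⟨h1, h2⟩
        · exact h2 (by rw [isBest_unique S v h1 hbi]; exact hbj)
        · exact h1 (by rw [isBest_unique S v' h2 hbj]; exact hbi)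
      have hbiS : bi ∈ S m := hbi.1
      have hbjS : bj ∈ S m := hbj.1
      have hG : armMean S v bj < armMean S v bi := hbi.2 bj hbjS (Ne.symm hij)
      have hG' : armMean S v' bi < armMean S v' bj := hbj.2 bi hbiS hij
      -- Delta bounds
      have hEne_i : ((S m).erase bi).Nonempty := erase_nonempty' (hS m) bi
      have hEne_j : ((S m).erase bj).Nonempty := erase_nonempty' (hS m) bj
      have hDi : Delta S v bi ≤ armMean S v bi - armMean S v bj := by
        have h1 := delta_le S v hbiS
        rw [bsup_eq_max' S v m bi hEne_i] at h1
        set Bi := (((S m).erase bi).image (armMean S v)).max' (hEne_i.image _) with hBi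
        have hlt : Bi < armMean S v bi := by
          rw [hBi]
          rw [Finset.max'_lt_iff]
          rintro y hy
          rw [Finset.mem_image] at hy
          obtain ⟨j, hj, rfl⟩ := hy
          exact hbi.2 j (Finset.mem_erase.1 hj).2 (Finset.mem_erase.1 hj).1
        have hge : armMean S v bj ≤ Bi :=
          Finset.le_max' _ _ (Finset.mem_image_of_mem _
            (Finset.mem_erase.2 ⟨Ne.symm hij, hbjS⟩))
        rw [abs_of_pos (by linarith)] at h1
        linarith
      have hDj : Delta S v bj ≤ armMean S v bi - armMean S v bj := by
        have h1 := delta_le S v hbjS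
        rw [bsup_eq_max' S v m bj hEne_j] at h1
        set Bj := (((S m).erase bj).image (armMean S v)).max' (hEne_j.image _) with hBj
        have hle : Bj ≤ armMean S v bi := by
          rw [hBj]
          apply Finset.max'_le
          rintro y hy
          rw [Finset.mem_image] at hy
          obtain ⟨j, hj, rfl⟩ := hy
          rcases eq_or_ne j bi with rfl | hjbi
          · exact le_rfl
          · exact (hbi.2 j (Finset.mem_erase.1 hj).2 hjbi).le
        have hge : armMean S v bi ≤ Bj :=
          Finset.le_max' _ _ (Finset.mem_image_of_mem _
            (Finset.mem_erase.2 ⟨hij, hbiS⟩))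
        have hBjeq : Bj = armMean S v bi := le_antisymm hle hge
        rw [hBjeq, abs_of_neg (by linarith : armMean S v bj - armMean S v bi < 0)] at h1
        linarith
      -- Cauchy–Schwarz cost bounds
      have hci := cost_ge S bi v v' (fun m' hm' => hpos m' bi hm') ⟨m, hbiS⟩
      have hcj := cost_ge S bj v v' (fun m' hm' => hpos m' bj hm') ⟨m, hbjS⟩
      have hsplit := total_ge_two S ω v v' hω.1 hij
      have hgi : gtilde S v ω ≤ (Delta S v bi) ^ 2 / 2 / armDenom S ω bi := by
        rw [hgt]; exact csInf_le hgtbdd ⟨bi, rfl⟩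
      have hgj : gtilde S v ω ≤ (Delta S v bj) ^ 2 / 2 / armDenom S ω bj := by
        rw [hgt]; exact csInf_le hgtbdd ⟨bj, rfl⟩
      set a := armDenom S ω bi with ha
      set b := armDenom S ω bj with hb
      have hapos : 0 < a := hden bi
      have hbpos : 0 < b := hden bj
      have ha0 : a ≠ 0 := (hden bi).ne'
      have hb0 : b ≠ 0 := (hden bj).ne'
      set Di := armMean S v bi - armMean S v' bi with hDidef
      set Dj := armMean S v bj - armMean S v' bj with hDjdef
      have hDsum : armMean S v bi - armMean S v bj ≤ Di - Dj := by
        rw [hDidef, hDjdef]; linarith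
      have hΔi0 : 0 ≤ Delta S v bi := delta_nonneg S v ⟨m, hbiS⟩
      have hΔj0 : 0 ≤ Delta S v bj := delta_nonneg S v ⟨m, hbjS⟩
      have key : (1 / 2) * gtilde S v ω ≤ Di ^ 2 / (2 * a) + Dj ^ 2 / (2 * b) := by
        rcases le_total b a with hab | hab
        · have hΔle : (Delta S v bi) ^ 2 ≤ (Di - Dj) ^ 2 := by
            nlinarith [hDi, hDsum, hΔi0]
          have h1 : (1 / 2) * gtilde S v ω ≤ (1 / 2) * ((Delta S v bi) ^ 2 / 2 / a) := by
            linarith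
          refine h1.trans ?_
          have h2 : (1 / 2) * ((Delta S v bi) ^ 2 / 2 / a) = (Delta S v bi) ^ 2 / (4 * a) := by
            rw [div_div, div_mul_div_comm, one_mul]
            congr 1
            ring
          rw [h2]
          have hkeypoly : (Delta S v bi) ^ 2 * b ≤ 2 * b * Di ^ 2 + 2 * a * Dj ^ 2 := by
            nlinarith [mul_nonneg hbpos.le (sq_nonneg (Di + Dj)),
              mul_nonneg (sub_nonneg.2 hab) (sq_nonneg Dj),
              mul_le_mul_of_nonneg_right hΔle hbpos.le]
          have h4 : Di ^ 2 / (2 * a) + Dj ^ 2 / (2 * b)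
              = (2 * b * Di ^ 2 + 2 * a * Dj ^ 2) / (4 * a * b) := by
            field_simp
            ring
          rw [h4, div_le_div_iff₀ (by positivity) (by positivity)]
          nlinarith [mul_le_mul_of_nonneg_left hkeypoly (by positivity : (0:ℝ) ≤ 4 * a)]
        · have hΔle : (Delta S v bj) ^ 2 ≤ (Di - Dj) ^ 2 := by
            nlinarith [hDj, hDsum, hΔj0]
          have h1 : (1 / 2) * gtilde S v ω ≤ (1 / 2) * ((Delta S v bj) ^ 2 / 2 / b) := by
            linarith
          refine h1.trans ?_
          have h2 : (1 / 2) * ((Delta S v bj) ^ 2 / 2 / b) = (Delta S v bj) ^ 2 / (4 * b) := by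
            rw [div_div, div_mul_div_comm, one_mul]
            congr 1
            ring
          rw [h2]
          have hkeypoly : (Delta S v bj) ^ 2 * a ≤ 2 * b * Di ^ 2 + 2 * a * Dj ^ 2 := by
            nlinarith [mul_nonneg hapos.le (sq_nonneg (Di + Dj)),
              mul_nonneg (sub_nonneg.2 hab) (sq_nonneg Di),
              mul_le_mul_of_nonneg_right hΔle hapos.le]
          have h4 : Di ^ 2 / (2 * a) + Dj ^ 2 / (2 * b)
              = (2 * b * Di ^ 2 + 2 * a * Dj ^ 2) / (4 * a * b) := by
            field_simp
            ring
          rw [h4, div_le_div_iff₀ (by positivity) (by positivity)]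
          nlinarith [mul_le_mul_of_nonneg_left hkeypoly (by positivity : (0:ℝ) ≤ 4 * b)]
      calc (1 / 2) * gtilde S v ω ≤ Di ^ 2 / (2 * a) + Dj ^ 2 / (2 * b) := key
        _ ≤ (∑ m' ∈ Finset.univ.filter (fun m' => bi ∈ S m'),
              ω m' bi * (v m' bi - v' m' bi) ^ 2 / 2)
            + (∑ m' ∈ Finset.univ.filter (fun m' => bj ∈ S m'),
              ω m' bj * (v m' bj - v' m' bj) ^ 2 / 2) := add_le_add hci hcj
        _ ≤ _ := hsplit
    exact ⟨hLB, hUB⟩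
end
end HetTS
end

section
/- Let A and B be disjoint nonempty finite sets, let ω : A → (0,∞) and υ : B → (0,∞), and let μ : A → ℝ and ν : B → ℝ. Set μ̄ := (1/|A|) Σ_{a∈A} μ_a, ν̄ := (1/|B|) Σ_{b∈B} ν_b, and D := (1/|A|²) Σ_{a∈A} 1/ω_a + (1/|B|²) Σ_{b∈B} 1/υ_b, and assume μ̄ > ν̄. Then the infimum of Σ_{a∈A} ω_a (μ_a − x_a)²/2 + Σ_{b∈B} υ_b (ν_b − y_b)²/2 over all x : A → ℝ and y : B → ℝ satisfying (1/|A|) Σ_{a∈A} x_a ≤ (1/|B|) Σ_{b∈B} y_b equals (μ̄ − ν̄)²/(2D), and this infimum is attained at x_a = μ_a − (μ̄ − ν̄)/(|A| ω_a D) and y_b = ν_b + (μ̄ − ν̄)/(|B| υ_b D). (The quadratic optimization step, Equations (27)–(28), in the proof of Lemma 2.) -/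
set_option maxHeartbeats 800000


open Finset

private lemma cs_union {ι : Type*} [DecidableEq ι] (A B : Finset ι) (hdisj : Disjoint A B)
    (ω υ t s : ι → ℝ) (hω : ∀ a ∈ A, 0 < ω a) (hυ : ∀ b ∈ B, 0 < υ b)
    (cA cB : ℝ) (hcA : 0 < cA) (hcB : 0 < cB) :
    ((1 / cA) * ∑ a ∈ A, t a + (1 / cB) * ∑ b ∈ B, s b) ^ 2 ≤
      ((∑ a ∈ A, ω a * t a ^ 2) + ∑ b ∈ B, υ b * s b ^ 2) *
      ((1 / cA ^ 2) * ∑ a ∈ A, 1 / ω a + (1 / cB ^ 2) * ∑ b ∈ B, 1 / υ b) := by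
  set f : ι → ℝ := fun i => if i ∈ A then Real.sqrt (ω i) * t i else Real.sqrt (υ i) * s i
  set g : ι → ℝ := fun i => if i ∈ A then 1 / (cA * Real.sqrt (ω i))
    else 1 / (cB * Real.sqrt (υ i))
  have hnA : ∀ b ∈ B, b ∉ A := fun b hb => Finset.disjoint_right.mp hdisj hb
  have key := sum_mul_sq_le_sq_mul_sq (A ∪ B) f g
  rw [Finset.sum_union hdisj, Finset.sum_union hdisj, Finset.sum_union hdisj] at key
  have e1 : ∑ a ∈ A, f a * g a = (1 / cA) * ∑ a ∈ A, t a := by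
    rw [Finset.mul_sum]
    refine Finset.sum_congr rfl fun a ha => ?_
    have h0 : Real.sqrt (ω a) ≠ 0 := Real.sqrt_ne_zero'.mpr (hω a ha)
    simp only [f, g, if_pos ha]
    field_simp
  have e2 : ∑ b ∈ B, f b * g b = (1 / cB) * ∑ b ∈ B, s b := by
    rw [Finset.mul_sum]
    refine Finset.sum_congr rfl fun b hb => ?_
    have h0 : Real.sqrt (υ b) ≠ 0 := Real.sqrt_ne_zero'.mpr (hυ b hb)
    simp only [f, g, if_neg (hnA b hb)]
    field_simp
  have e3 : ∑ a ∈ A, f a ^ 2 = ∑ a ∈ A, ω a * t a ^ 2 := by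
    refine Finset.sum_congr rfl fun a ha => ?_
    simp only [f, if_pos ha, mul_pow, Real.sq_sqrt (hω a ha).le]
  have e4 : ∑ b ∈ B, f b ^ 2 = ∑ b ∈ B, υ b * s b ^ 2 := by
    refine Finset.sum_congr rfl fun b hb => ?_
    simp only [f, if_neg (hnA b hb), mul_pow, Real.sq_sqrt (hυ b hb).le]
  have e5 : ∑ a ∈ A, g a ^ 2 = (1 / cA ^ 2) * ∑ a ∈ A, 1 / ω a := by
    rw [Finset.mul_sum]
    refine Finset.sum_congr rfl fun a ha => ?_
    have h0 : Real.sqrt (ω a) ≠ 0 := Real.sqrt_ne_zero'.mpr (hω a ha)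
    simp only [g, if_pos ha, div_pow, mul_pow, Real.sq_sqrt (hω a ha).le]
    field_simp
  have e6 : ∑ b ∈ B, g b ^ 2 = (1 / cB ^ 2) * ∑ b ∈ B, 1 / υ b := by
    rw [Finset.mul_sum]
    refine Finset.sum_congr rfl fun b hb => ?_
    have h0 : Real.sqrt (υ b) ≠ 0 := Real.sqrt_ne_zero'.mpr (hυ b hb)
    simp only [g, if_neg (hnA b hb), div_pow, mul_pow, Real.sq_sqrt (hυ b hb).le]
    field_simp
  rw [e1, e2, e3, e4, e5, e6] at key
  exact key

/-- The constrained quadratic minimization step (Equations (27)-(28) in the proof of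
Lemma 2): the infimum of `∑_{a∈A} ω_a (μ_a - x_a)²/2 + ∑_{b∈B} υ_b (ν_b - y_b)²/2` over
`x, y` with `(1/|A|)∑ x_a ≤ (1/|B|)∑ y_b` equals `(μ̄ - ν̄)²/(2D)`, attained at the
indicated point. -/
theorem stmt2 {ι : Type*} (A B : Finset ι) (hA : A.Nonempty) (hB : B.Nonempty)
    (hdisj : Disjoint A B) (ω υ μ ν : ι → ℝ)
    (hω : ∀ a ∈ A, 0 < ω a) (hυ : ∀ b ∈ B, 0 < υ b)
    (μbar νbar D : ℝ)
    (hμbar : μbar = (1 / (A.card : ℝ)) * ∑ a ∈ A, μ a)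
    (hνbar : νbar = (1 / (B.card : ℝ)) * ∑ b ∈ B, ν b)
    (hD : D = (1 / (A.card : ℝ) ^ 2) * ∑ a ∈ A, 1 / ω a +
      (1 / (B.card : ℝ) ^ 2) * ∑ b ∈ B, 1 / υ b)
    (hgt : νbar < μbar) :
    IsLeast {z : ℝ | ∃ x y : ι → ℝ,
        (1 / (A.card : ℝ)) * ∑ a ∈ A, x a ≤ (1 / (B.card : ℝ)) * ∑ b ∈ B, y b ∧
        z = ∑ a ∈ A, ω a * (μ a - x a) ^ 2 / 2 + ∑ b ∈ B, υ b * (ν b - y b) ^ 2 / 2}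
      ((μbar - νbar) ^ 2 / (2 * D)) ∧
    (1 / (A.card : ℝ)) * ∑ a ∈ A, (μ a - (μbar - νbar) / ((A.card : ℝ) * ω a * D)) ≤
      (1 / (B.card : ℝ)) * ∑ b ∈ B, (ν b + (μbar - νbar) / ((B.card : ℝ) * υ b * D)) ∧
    ∑ a ∈ A, ω a * (μ a - (μ a - (μbar - νbar) / ((A.card : ℝ) * ω a * D))) ^ 2 / 2 +
      ∑ b ∈ B, υ b * (ν b - (ν b + (μbar - νbar) / ((B.card : ℝ) * υ b * D))) ^ 2 / 2 =
        (μbar - νbar) ^ 2 / (2 * D) := by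
  classical
  have hAc : (0:ℝ) < A.card := by exact_mod_cast hA.card_pos
  have hBc : (0:ℝ) < B.card := by exact_mod_cast hB.card_pos
  set m : ℝ := μbar - νbar with hm
  have hm0 : 0 < m := sub_pos.mpr hgt
  have hSA : 0 < ∑ a ∈ A, 1 / ω a :=
    Finset.sum_pos (fun a ha => div_pos one_pos (hω a ha)) hA
  have hSB : 0 < ∑ b ∈ B, 1 / υ b :=
    Finset.sum_pos (fun b hb => div_pos one_pos (hυ b hb)) hB
  set p : ℝ := (1 / (A.card : ℝ) ^ 2) * ∑ a ∈ A, 1 / ω a with hp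
  set q : ℝ := (1 / (B.card : ℝ) ^ 2) * ∑ b ∈ B, 1 / υ b with hq
  have hp0 : 0 < p := by positivity
  have hq0 : 0 < q := by positivity
  have hD0 : 0 < D := by rw [hD]; linarith
  have hpq : p + q = D := hD.symm
  -- sums at the attained point
  have hxsum : ∑ a ∈ A, (μ a - m / ((A.card : ℝ) * ω a * D)) =
      (∑ a ∈ A, μ a) - (m / ((A.card : ℝ) * D)) * ∑ a ∈ A, 1 / ω a := by
    rw [Finset.sum_sub_distrib, Finset.mul_sum]
    congr 1
    refine Finset.sum_congr rfl fun a ha => ?_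
    have h0 := (hω a ha).ne'
    field_simp
  have hysum : ∑ b ∈ B, (ν b + m / ((B.card : ℝ) * υ b * D)) =
      (∑ b ∈ B, ν b) + (m / ((B.card : ℝ) * D)) * ∑ b ∈ B, 1 / υ b := by
    rw [Finset.sum_add_distrib, Finset.mul_sum]
    congr 1
    refine Finset.sum_congr rfl fun b hb => ?_
    have h0 := (hυ b hb).ne'
    field_simp
  have hconstr : (1 / (A.card : ℝ)) * ∑ a ∈ A, (μ a - m / ((A.card : ℝ) * ω a * D)) ≤
      (1 / (B.card : ℝ)) * ∑ b ∈ B, (ν b + m / ((B.card : ℝ) * υ b * D)) := by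
    rw [hxsum, hysum]
    have h1 : (1 / (A.card : ℝ)) * ((∑ a ∈ A, μ a) - (m / ((A.card : ℝ) * D)) * ∑ a ∈ A, 1 / ω a)
        = μbar - (m / D) * p := by
      rw [hμbar, hp]; field_simp
    have h2 : (1 / (B.card : ℝ)) * ((∑ b ∈ B, ν b) + (m / ((B.card : ℝ) * D)) * ∑ b ∈ B, 1 / υ b)
        = νbar + (m / D) * q := by
      rw [hνbar, hq]; field_simp
    rw [h1, h2]
    have h3 : (m / D) * (p + q) = m := by rw [hpq]; field_simp
    nlinarith [h3]
  have hvalA : ∑ a ∈ A, ω a * (μ a - (μ a - m / ((A.card : ℝ) * ω a * D))) ^ 2 / 2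
      = (m ^ 2 / (2 * D ^ 2)) * p := by
    rw [hp, ← mul_assoc, Finset.mul_sum]
    refine Finset.sum_congr rfl fun a ha => ?_
    have h0 := (hω a ha).ne'
    field_simp
    ring
  have hvalB : ∑ b ∈ B, υ b * (ν b - (ν b + m / ((B.card : ℝ) * υ b * D))) ^ 2 / 2
      = (m ^ 2 / (2 * D ^ 2)) * q := by
    rw [hq, ← mul_assoc, Finset.mul_sum]
    refine Finset.sum_congr rfl fun b hb => ?_
    have h0 := (hυ b hb).ne'
    field_simp
    ring
  have hval : ∑ a ∈ A, ω a * (μ a - (μ a - m / ((A.card : ℝ) * ω a * D))) ^ 2 / 2 +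
      ∑ b ∈ B, υ b * (ν b - (ν b + m / ((B.card : ℝ) * υ b * D))) ^ 2 / 2
      = m ^ 2 / (2 * D) := by
    rw [hvalA, hvalB, ← mul_add, hpq]
    field_simp
  refine ⟨⟨⟨_, _, hconstr, hval.symm⟩, ?_⟩, hconstr, hval⟩
  -- lower bound for any feasible (x, y)
  rintro z ⟨x, y, hcon, rfl⟩
  set P : ℝ := ∑ a ∈ A, ω a * (μ a - x a) ^ 2 with hP
  set Q : ℝ := ∑ b ∈ B, υ b * (ν b - y b) ^ 2 with hQ
  have hP0 : 0 ≤ P := Finset.sum_nonneg fun a ha => by have := hω a ha; positivity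
  have hQ0 : 0 ≤ Q := Finset.sum_nonneg fun b hb => by have := hυ b hb; positivity
  set u : ℝ := (1 / (A.card : ℝ)) * ∑ a ∈ A, (μ a - x a) with hu
  set v : ℝ := (1 / (B.card : ℝ)) * ∑ b ∈ B, (y b - ν b) with hv
  have huv : m ≤ u + v := by
    have h1 : u = μbar - (1 / (A.card : ℝ)) * ∑ a ∈ A, x a := by
      rw [hu, hμbar, Finset.sum_sub_distrib, mul_sub]
    have h2 : v = (1 / (B.card : ℝ)) * ∑ b ∈ B, y b - νbar := by
      rw [hv, hνbar, Finset.sum_sub_distrib, mul_sub]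
    rw [hm, h1, h2]
    linarith [hcon]
  have key := cs_union A B hdisj ω υ (fun a => μ a - x a) (fun b => y b - ν b) hω hυ
    (A.card : ℝ) (B.card : ℝ) hAc hBc
  have hQ' : ∑ b ∈ B, υ b * (y b - ν b) ^ 2 = Q := by
    rw [hQ]
    refine Finset.sum_congr rfl fun b hb => ?_
    ring
  rw [hQ'] at key
  -- key : (u + v)^2 ≤ (P + Q) * (p + q)
  have hm2 : m ^ 2 ≤ (P + Q) * D := by
    rw [← hpq]
    calc m ^ 2 ≤ (u + v) ^ 2 := by nlinarith [huv, hm0]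
      _ ≤ (P + Q) * (p + q) := key
  rw [div_le_iff₀ (by positivity)]
  have hobj : ∑ a ∈ A, ω a * (μ a - x a) ^ 2 / 2 + ∑ b ∈ B, υ b * (ν b - y b) ^ 2 / 2
      = (P + Q) / 2 := by
    rw [hP, hQ, ← Finset.sum_div, ← Finset.sum_div]
    ring
  rw [hobj]
  nlinarith [hm2, hD0]
end

section
/- Given v ∈ P, there exists ω ∈ Γ that attains max_{ω'∈Γ} g̃_v(ω') and satisfies the balanced condition. (Proposition 2 of the paper.) -/
open Finset
open scoped Classical

namespace HetTS

noncomputable section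

variable {K M : ℕ}

/-! ### Auxiliary material for Proposition 2 -/

section Prop2Aux

variable {K M : ℕ}

private lemma le_zero_of_forall_le_mul {c A : ℝ} (h : ∀ ε : ℝ, 0 < ε → c ≤ A * ε) :
    c ≤ 0 := by
  by_contra hc
  push_neg at hc
  rcases le_or_gt A 0 with hA | hA
  · have h1 := h 1 one_pos
    nlinarith
  · have h2 := h (c / (2 * A)) (by positivity)
    have h3 : A * (c / (2 * A)) = c / 2 := by field_simp
    rw [h3] at h2
    linarith

private lemma armRel_symm {S : Fin M → Finset (Fin K)} {i j : Fin K} (h : armRel S i j) :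
    armRel S j i := by
  obtain ⟨m, h1, h2⟩ := h; exact ⟨m, h2, h1⟩

private lemma rel_of_mem_mem {S : Fin M → Finset (Fin K)} {m : Fin M} {i j : Fin K}
    (hi : i ∈ S m) (hj : j ∈ S m) : Relation.EqvGen (armRel S) i j :=
  Relation.EqvGen.rel _ _ ⟨m, hi, hj⟩

private lemma mem_classFinset {S : Fin M → Finset (Fin K)} {i j : Fin K} :
    j ∈ classFinset S i ↔ Relation.EqvGen (armRel S) i j := by
  simp [classFinset]

private lemma classFinset_congr {S : Fin M → Finset (Fin K)} {i p : Fin K}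
    (h : Relation.EqvGen (armRel S) p i) : classFinset S i = classFinset S p := by
  ext j
  simp only [mem_classFinset]
  exact ⟨fun hj => Relation.EqvGen.trans _ _ _ h hj,
    fun hj => Relation.EqvGen.trans _ _ _ (Relation.EqvGen.symm _ _ h) hj⟩

/-- The clients whose arm set lies in the class of `p`. -/
private def clientsOf (S : Fin M → Finset (Fin K)) (p : Fin K) : Finset (Fin M) :=
  Finset.univ.filter fun m => ∃ j ∈ S m, Relation.EqvGen (armRel S) p j

private lemma mem_clientsOf {S : Fin M → Finset (Fin K)} {p : Fin K} {m : Fin M} :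
    m ∈ clientsOf S p ↔ ∃ j ∈ S m, Relation.EqvGen (armRel S) p j := by
  simp [clientsOf]

private lemma mem_clientsOf_of_mem {S : Fin M → Finset (Fin K)} {p : Fin K} {m : Fin M}
    (hp : p ∈ S m) : m ∈ clientsOf S p :=
  mem_clientsOf.mpr ⟨p, hp, Relation.EqvGen.refl p⟩

private lemma rel_of_clientsOf {S : Fin M → Finset (Fin K)} {p : Fin K} {m : Fin M}
    (hm : m ∈ clientsOf S p) {j : Fin K} (hj : j ∈ S m) :
    Relation.EqvGen (armRel S) p j := by
  obtain ⟨j₀, hj₀, hr⟩ := mem_clientsOf.mp hm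
  exact Relation.EqvGen.trans _ _ _ hr (rel_of_mem_mem hj₀ hj)

/-- `D_i = Δ_i² M_i² / 2`. -/
private def Dq (S : Fin M → Finset (Fin K)) (v : Fin M → Fin K → ℝ) (i : Fin K) : ℝ :=
  (Delta S v i) ^ 2 * ((Mi S i : ℝ)) ^ 2 / 2

/-- The objective `F(y) = Σ_m (Σ_{j ∈ S_m} y_j)²`. -/
private def Ffun (S : Fin M → Finset (Fin K)) (y : Fin K → ℝ) : ℝ :=
  ∑ m : Fin M, (∑ j ∈ S m, y j) ^ 2

/-- The constraint set: nonnegative `y` with `Σ_{j ∈ class i} D_j y_j² = 1` for each `i`. -/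
private def ESet (S : Fin M → Finset (Fin K)) (v : Fin M → Fin K → ℝ) : Set (Fin K → ℝ) :=
  {y | (∀ i, 0 ≤ y i) ∧ ∀ i, ∑ j ∈ classFinset S i, Dq S v j * y j ^ 2 = 1}

private lemma Delta_pos {S : Fin M → Finset (Fin K)} (hS : ∀ m, 2 ≤ (S m).card)
    (hcov : ∀ i : Fin K, ∃ m, i ∈ S m) {v : Fin M → Fin K → ℝ} (hv : v ∈ PSet S)
    (i : Fin K) : 0 < Delta S v i := by
  have hfin : {x | ∃ m : Fin M, i ∈ S m ∧
      x = |armMean S v i - sSup {y | ∃ j ∈ S m, j ≠ i ∧ y = armMean S v j}|}.Finite := by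
    apply Set.Finite.subset (Set.finite_range fun m : Fin M =>
      |armMean S v i - sSup {y | ∃ j ∈ S m, j ≠ i ∧ y = armMean S v j}|)
    rintro x ⟨m, _, rfl⟩
    exact ⟨m, rfl⟩
  obtain ⟨m₀, hm₀⟩ := hcov i
  have hne : {x | ∃ m : Fin M, i ∈ S m ∧
      x = |armMean S v i - sSup {y | ∃ j ∈ S m, j ≠ i ∧ y = armMean S v j}|}.Nonempty :=
    ⟨_, m₀, hm₀, rfl⟩
  have hpos : ∀ x ∈ {x | ∃ m : Fin M, i ∈ S m ∧
      x = |armMean S v i - sSup {y | ∃ j ∈ S m, j ≠ i ∧ y = armMean S v j}|}, 0 < x := by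
    rintro x ⟨m, him, rfl⟩
    have hYfin : {y | ∃ j ∈ S m, j ≠ i ∧ y = armMean S v j}.Finite := by
      apply Set.Finite.subset (Set.finite_range fun j : Fin K => armMean S v j)
      rintro y ⟨j, _, _, rfl⟩
      exact ⟨j, rfl⟩
    have hYne : {y | ∃ j ∈ S m, j ≠ i ∧ y = armMean S v j}.Nonempty := by
      obtain ⟨j, hjm, hji⟩ := Finset.exists_mem_ne
        (lt_of_lt_of_le one_lt_two (hS m)) i
      exact ⟨armMean S v j, j, hjm, hji, rfl⟩
    obtain ⟨j₀, hj₀m, hj₀i, hj₀⟩ := hYne.csSup_mem hYfin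
    obtain ⟨b, hbmem, hblt⟩ := hv m
    rw [abs_pos, sub_ne_zero]
    by_cases hib : i = b
    · subst hib
      have := hblt j₀ hj₀m hj₀i
      rw [hj₀]
      exact ne_of_gt this
    · have h1 : armMean S v i < armMean S v b := hblt i him hib
      have h2 : armMean S v b ≤ sSup {y | ∃ j ∈ S m, j ≠ i ∧ y = armMean S v j} :=
        le_csSup hYfin.bddAbove ⟨b, hbmem, fun h => hib h.symm, rfl⟩
      exact ne_of_lt (lt_of_lt_of_le h1 h2)
  exact hpos _ (hne.csInf_mem hfin)

private lemma Mi_cast_pos {S : Fin M → Finset (Fin K)} (hcov : ∀ i : Fin K, ∃ m, i ∈ S m)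
    (i : Fin K) : (0 : ℝ) < (Mi S i : ℝ) := by
  obtain ⟨m, hm⟩ := hcov i
  exact_mod_cast Finset.card_pos.mpr ⟨m, Finset.mem_filter.mpr ⟨Finset.mem_univ m, hm⟩⟩

private lemma exists_max {S : Fin M → Finset (Fin K)} {v : Fin M → Fin K → ℝ}
    (hDq : ∀ i, 0 < Dq S v i) :
    ∃ y ∈ ESet S v, ∀ z ∈ ESet S v, Ffun S z ≤ Ffun S y := by
  have hclosed : IsClosed (ESet S v) := by
    have hE : ESet S v = (⋂ i, {y : Fin K → ℝ | 0 ≤ y i}) ∩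
        ⋂ i, {y : Fin K → ℝ | ∑ j ∈ classFinset S i, Dq S v j * y j ^ 2 = 1} := by
      ext y
      simp [ESet, Set.mem_iInter, forall_and]
    rw [hE]
    refine IsClosed.inter (isClosed_iInter fun i => ?_) (isClosed_iInter fun i => ?_)
    · exact isClosed_le continuous_const (continuous_apply i)
    · exact isClosed_eq (continuous_finset_sum _ fun j _ =>
        (continuous_const.mul ((continuous_apply j).pow 2))) continuous_const
  have hsub : ESet S v ⊆ Set.pi Set.univ fun i => Set.Icc 0 (Real.sqrt (1 / Dq S v i)) := by
    intro y hy i _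
    refine ⟨hy.1 i, ?_⟩
    have h1 : Dq S v i * y i ^ 2 ≤ 1 := by
      have hsum := hy.2 i
      calc Dq S v i * y i ^ 2
          ≤ ∑ j ∈ classFinset S i, Dq S v j * y j ^ 2 :=
            Finset.single_le_sum (fun j _ => mul_nonneg (hDq j).le (sq_nonneg _))
              (mem_classFinset.mpr (Relation.EqvGen.refl i))
        _ = 1 := hsum
    have h2 : y i ^ 2 ≤ 1 / Dq S v i := by
      rw [le_div_iff₀ (hDq i)]
      linarith [h1, mul_comm (Dq S v i) (y i ^ 2)]
    calc y i = Real.sqrt (y i ^ 2) := (Real.sqrt_sq (hy.1 i)).symm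
      _ ≤ Real.sqrt (1 / Dq S v i) := Real.sqrt_le_sqrt h2
  have hcompact : IsCompact (ESet S v) :=
    IsCompact.of_isClosed_subset (isCompact_univ_pi fun i => isCompact_Icc) hclosed hsub
  have hne : (ESet S v).Nonempty := by
    refine ⟨fun i => Real.sqrt (1 / ∑ j ∈ classFinset S i, Dq S v j), fun i => Real.sqrt_nonneg _, ?_⟩
    intro i
    have hpos : 0 < ∑ j ∈ classFinset S i, Dq S v j :=
      Finset.sum_pos (fun j _ => hDq j) ⟨i, mem_classFinset.mpr (Relation.EqvGen.refl i)⟩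
    have hcongr : ∀ j ∈ classFinset S i,
        Dq S v j * (Real.sqrt (1 / ∑ j' ∈ classFinset S j, Dq S v j')) ^ 2
          = Dq S v j * (1 / ∑ j' ∈ classFinset S i, Dq S v j') := by
      intro j hj
      rw [classFinset_congr (mem_classFinset.mp hj)]
      rw [Real.sq_sqrt (by positivity)]
    rw [Finset.sum_congr rfl hcongr, ← Finset.sum_mul, mul_one_div, div_self (ne_of_gt hpos)]
  have hFcont : ContinuousOn (Ffun S) (ESet S v) := by
    apply Continuous.continuousOn
    apply continuous_finset_sum
    intro m _
    exact (continuous_finset_sum _ fun j _ => continuous_apply j).pow 2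
  obtain ⟨y, hyE, hymax⟩ := hcompact.exists_isMaxOn hne hFcont
  exact ⟨y, hyE, fun z hz => hymax hz⟩

private lemma key_ineq {S : Fin M → Finset (Fin K)} {v : Fin M → Fin K → ℝ}
    (hDq : ∀ i, 0 < Dq S v i) {y : Fin K → ℝ} (hyE : y ∈ ESet S v)
    (hymax : ∀ z ∈ ESet S v, Ffun S z ≤ Ffun S y) (p : Fin K) :
    ∑ m ∈ Finset.univ.filter (fun m => p ∈ S m), ∑ j ∈ S m, y j
      ≤ (∑ m ∈ clientsOf S p, (∑ j ∈ S m, y j) ^ 2) * Dq S v p * y p := by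
  set D := Dq S v p with hD
  set a := y p with ha
  set A := ∑ m ∈ clientsOf S p, (∑ j ∈ S m, y j) ^ 2 with hA
  set T := ∑ m ∈ Finset.univ.filter (fun m => p ∈ S m), ∑ j ∈ S m, y j with hT
  have hA0 : 0 ≤ A := Finset.sum_nonneg fun m _ => sq_nonneg _
  have ha0 : 0 ≤ a := hyE.1 p
  have hD0 : 0 < D := hDq p
  have key : ∀ ε : ℝ, 0 < ε → 2 * T - 2 * (A * D * a) ≤ A * D * ε := by
    intro ε hε
    set R := 1 + D * (2 * a * ε + ε ^ 2) with hR
    have hR1 : 1 < R := by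
      have : 0 < D * (2 * a * ε + ε ^ 2) := mul_pos hD0 (by nlinarith)
      linarith
    have hRpos : 0 < R := by linarith
    set r := Real.sqrt R with hr
    have hrpos : 0 < r := Real.sqrt_pos.mpr hRpos
    have hr2 : r ^ 2 = R := Real.sq_sqrt hRpos.le
    set z : Fin K → ℝ := fun j => if j = p then y j + ε else y j with hz
    set w : Fin K → ℝ := fun j => if j ∈ classFinset S p then z j / r else y j with hw
    have hz0 : ∀ j, 0 ≤ z j := by
      intro j
      by_cases hj : j = p <;> simp only [hz, hj, if_pos, if_neg, if_true, if_false]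
      · exact add_nonneg (hyE.1 p) hε.le
      · exact hyE.1 j
    have hclass : ∑ j ∈ classFinset S p, Dq S v j * z j ^ 2 = R := by
      have hsplit : ∀ j ∈ classFinset S p, Dq S v j * z j ^ 2
          = Dq S v j * y j ^ 2 + (if j = p then D * (2 * a * ε + ε ^ 2) else 0) := by
        intro j hj
        by_cases hjp : j = p
        · subst hjp
          simp only [hz, if_pos rfl, if_true, hD, ha]
          ring
        · simp [hz, hjp]
      rw [Finset.sum_congr rfl hsplit, Finset.sum_add_distrib, hyE.2 p,
        Finset.sum_ite_eq' (classFinset S p) p (fun _ => D * (2 * a * ε + ε ^ 2)),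
        if_pos (mem_classFinset.mpr (Relation.EqvGen.refl p))]
    have hwE : w ∈ ESet S v := by
      constructor
      · intro j
        by_cases hj : j ∈ classFinset S p
        · simp only [hw, if_pos hj]
          exact div_nonneg (hz0 j) hrpos.le
        · simp only [hw, if_neg hj]
          exact hyE.1 j
      · intro i
        by_cases hip : Relation.EqvGen (armRel S) p i
        · rw [classFinset_congr hip]
          have hcongr : ∀ j ∈ classFinset S p, Dq S v j * w j ^ 2
              = (Dq S v j * z j ^ 2) / R := by
            intro j hj
            simp only [hw, if_pos hj]
            rw [div_pow, hr2]
            ring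
          rw [Finset.sum_congr rfl hcongr, ← Finset.sum_div, hclass,
            div_self (ne_of_gt hRpos)]
        · have hcongr : ∀ j ∈ classFinset S i, Dq S v j * w j ^ 2 = Dq S v j * y j ^ 2 := by
            intro j hj
            have hjp : j ∉ classFinset S p := by
              intro hjc
              exact hip (Relation.EqvGen.trans _ _ _ (mem_classFinset.mp hjc)
                (Relation.EqvGen.symm _ _ (mem_classFinset.mp hj)))
            simp only [hw, if_neg hjp]
          rw [Finset.sum_congr rfl hcongr, hyE.2 i]
    have hineq := hymax w hwE
    -- split `Ffun` into clients of the class of `p` and the rest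
    have hsplitF : ∀ u : Fin K → ℝ, Ffun S u
        = ∑ m ∈ Finset.univ.filter (fun m => ∃ j ∈ S m, Relation.EqvGen (armRel S) p j),
            (∑ j ∈ S m, u j) ^ 2
          + ∑ m ∈ Finset.univ.filter
              (fun m => ¬ ∃ j ∈ S m, Relation.EqvGen (armRel S) p j),
            (∑ j ∈ S m, u j) ^ 2 := by
      intro u
      rw [Ffun, Finset.sum_filter_add_sum_filter_not]
    have htail : ∑ m ∈ Finset.univ.filter
          (fun m => ¬ ∃ j ∈ S m, Relation.EqvGen (armRel S) p j), (∑ j ∈ S m, w j) ^ 2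
        = ∑ m ∈ Finset.univ.filter
          (fun m => ¬ ∃ j ∈ S m, Relation.EqvGen (armRel S) p j), (∑ j ∈ S m, y j) ^ 2 := by
      apply Finset.sum_congr rfl
      intro m hm
      have hm' := (Finset.mem_filter.mp hm).2
      push_neg at hm'
      congr 1
      apply Finset.sum_congr rfl
      intro j hj
      have : j ∉ classFinset S p := fun hc => (hm' j hj) (mem_classFinset.mp hc)
      simp only [hw, if_neg this]
    have hhead : ∑ m ∈ Finset.univ.filter
          (fun m => ∃ j ∈ S m, Relation.EqvGen (armRel S) p j), (∑ j ∈ S m, w j) ^ 2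
        = (∑ m ∈ clientsOf S p, (∑ j ∈ S m, z j) ^ 2) / R := by
      have hcl : clientsOf S p
          = Finset.univ.filter (fun m => ∃ j ∈ S m, Relation.EqvGen (armRel S) p j) := rfl
      rw [hcl, Finset.sum_div]
      apply Finset.sum_congr rfl
      intro m hm
      rw [← hcl] at hm
      have hsum : ∑ j ∈ S m, w j = (∑ j ∈ S m, z j) / r := by
        rw [Finset.sum_div]
        apply Finset.sum_congr rfl
        intro j hj
        have : j ∈ classFinset S p :=
          mem_classFinset.mpr (rel_of_clientsOf hm hj)
        simp only [hw, if_pos this]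
      rw [hsum, div_pow, hr2]
    set A' := ∑ m ∈ clientsOf S p, (∑ j ∈ S m, z j) ^ 2 with hA'
    have hA'val : A' = A + (2 * ε * T + ε ^ 2 * (Mi S p : ℝ)) := by
      have hzsum : ∀ m : Fin M, ∑ j ∈ S m, z j
          = ∑ j ∈ S m, y j + (if p ∈ S m then ε else 0) := by
        intro m
        have : ∀ j ∈ S m, z j = y j + (if j = p then ε else 0) := by
          intro j hj
          by_cases hjp : j = p <;> simp [hz, hjp]
        rw [Finset.sum_congr rfl this, Finset.sum_add_distrib,
          Finset.sum_ite_eq' (S m) p (fun _ => ε)]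
      have hterm : ∀ m : Fin M, (∑ j ∈ S m, z j) ^ 2
          = (∑ j ∈ S m, y j) ^ 2
            + (if p ∈ S m then 2 * ε * (∑ j ∈ S m, y j) + ε ^ 2 else 0) := by
        intro m
        rw [hzsum m]
        by_cases hpm : p ∈ S m <;> simp [hpm] <;> ring
      rw [hA', Finset.sum_congr rfl (fun m _ => hterm m), Finset.sum_add_distrib]
      congr 1
      have hext : ∑ m ∈ clientsOf S p,
            (if p ∈ S m then 2 * ε * (∑ j ∈ S m, y j) + ε ^ 2 else 0)
          = ∑ m : Fin M, (if p ∈ S m then 2 * ε * (∑ j ∈ S m, y j) + ε ^ 2 else 0) := by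
        apply Finset.sum_subset (Finset.subset_univ _)
        intro m _ hm
        have : p ∉ S m := fun hp => hm (mem_clientsOf_of_mem hp)
        simp [this]
      rw [hext, ← Finset.sum_filter, Finset.sum_add_distrib, Finset.sum_const,
        ← Finset.mul_sum, nsmul_eq_mul, Mi]
      ring
    -- from optimality: A' / R ≤ A
    rw [hsplitF w, hsplitF y, htail, hhead] at hineq
    have hAR : A' ≤ A * R := by
      have h1 : A' / R ≤ A := by
        have : (∑ m ∈ Finset.univ.filter
            (fun m => ∃ j ∈ S m, Relation.EqvGen (armRel S) p j), (∑ j ∈ S m, y j) ^ 2) = A := rfl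
        linarith [hineq, this]
      calc A' = (A' / R) * R := by field_simp
        _ ≤ A * R := mul_le_mul_of_nonneg_right h1 hRpos.le
    rw [hA'val, hR] at hAR
    have hMi0 : (0 : ℝ) ≤ (Mi S p : ℝ) := Nat.cast_nonneg _
    nlinarith [hAR, hε, mul_nonneg (mul_nonneg hA0 hD0.le) (sq_nonneg ε)]
  have := le_zero_of_forall_le_mul key
  linarith

private lemma y_pos {S : Fin M → Finset (Fin K)} {v : Fin M → Fin K → ℝ}
    (hDq : ∀ i, 0 < Dq S v i) {y : Fin K → ℝ} (hyE : y ∈ ESet S v)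
    (hymax : ∀ z ∈ ESet S v, Ffun S z ≤ Ffun S y) (i : Fin K) : 0 < y i := by
  have step : ∀ p q : Fin K, armRel S p q → 0 < y q → 0 < y p := by
    intro p q hpq hq
    rcases (hyE.1 p).lt_or_eq with h | h
    · exact h
    exfalso
    obtain ⟨m, hpm, hqm⟩ := hpq
    have hk := key_ineq hDq hyE hymax p
    rw [← h, mul_zero] at hk
    have hs : 0 < ∑ j ∈ S m, y j :=
      lt_of_lt_of_le hq (Finset.single_le_sum (fun j _ => hyE.1 j) hqm)
    have hTpos : 0 < ∑ m' ∈ Finset.univ.filter (fun m' => p ∈ S m'), ∑ j ∈ S m', y j :=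
      lt_of_lt_of_le hs (Finset.single_le_sum
        (fun m' _ => Finset.sum_nonneg fun j _ => hyE.1 j)
        (Finset.mem_filter.mpr ⟨Finset.mem_univ m, hpm⟩))
    linarith
  have hiff : ∀ p q : Fin K, Relation.EqvGen (armRel S) p q → (0 < y p ↔ 0 < y q) := by
    intro p q h
    induction h with
    | rel a b hab => exact ⟨fun ha => step b a (armRel_symm hab) ha, fun hb => step a b hab hb⟩
    | refl a => exact Iff.rfl
    | symm a b _ ih => exact ih.symm
    | trans a b c _ _ ih1 ih2 => exact ih1.trans ih2
  by_contra hneg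
  have hzero : ∀ j ∈ classFinset S i, Dq S v j * y j ^ 2 = 0 := by
    intro j hj
    have hrel := mem_classFinset.mp hj
    have hnj : ¬ 0 < y j := fun hpos => hneg ((hiff i j hrel).mpr hpos)
    have : y j = 0 := le_antisymm (not_lt.mp hnj) (hyE.1 j)
    rw [this]
    ring
  have hsum := hyE.2 i
  rw [Finset.sum_eq_zero hzero] at hsum
  exact one_ne_zero hsum.symm

end Prop2Aux

/-- Proposition 2: some maximizer of `g̃_v` over `Γ` satisfies the balanced condition. -/
theorem stmt3 (K M : ℕ) (hK : 2 ≤ K) (hM : 1 ≤ M) (S : Fin M → Finset (Fin K))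
    (hS : ∀ m, 2 ≤ (S m).card) (hcov : ∀ i : Fin K, ∃ m, i ∈ S m)
    (v : Fin M → Fin K → ℝ) (hv : v ∈ PSet S) :
    ∃ ω ∈ Gam S, (∀ ω' ∈ Gam S, gtilde S v ω' ≤ gtilde S v ω) ∧ BalancedCond S ω := by
  classical
  haveI : Nonempty (Fin K) := ⟨⟨0, by omega⟩⟩
  have hMi : ∀ i, (0 : ℝ) < (Mi S i : ℝ) := Mi_cast_pos hcov
  have hDel : ∀ i, 0 < Delta S v i := Delta_pos hS hcov hv
  have hDq : ∀ i, 0 < Dq S v i := fun i =>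
    div_pos (mul_pos (pow_pos (hDel i) 2) (pow_pos (hMi i) 2)) two_pos
  obtain ⟨y, hyE, hymax⟩ := exists_max hDq
  have hypos : ∀ i, 0 < y i := y_pos hDq hyE hymax
  have hspos : ∀ m, 0 < ∑ j ∈ S m, y j := fun m =>
    Finset.sum_pos (fun j _ => hypos j) (Finset.card_pos.mp (by have := hS m; omega))
  set ω : Fin M → Fin K → ℝ := fun m i => if i ∈ S m then y i / ∑ j ∈ S m, y j else 0
    with hωdef
  have hωpos : ∀ m, ∀ i ∈ S m, 0 < ω m i := fun m i hi => by
    simp only [hωdef, if_pos hi]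
    exact div_pos (hypos i) (hspos m)
  have hωGam : ω ∈ Gam S := by
    refine ⟨fun m i hi => (hωpos m i hi).le, fun m => ?_, fun m i hi => by
      simp [hωdef, hi]⟩
    have hc : ∀ i ∈ S m, ω m i = y i / ∑ j ∈ S m, y j := fun i hi => by
      simp [hωdef, hi]
    rw [Finset.sum_congr rfl hc, ← Finset.sum_div]
    exact div_self (hspos m).ne'
  have hbal : BalancedCond S ω := by
    have hdd : ∀ (mm : Fin M) (u w : Fin K), u ∈ S mm → w ∈ S mm →
        ω mm u / ω mm w = y u / y w := by
      intro mm u w hu hw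
      simp only [hωdef, if_pos hu, if_pos hw]
      rw [div_div_eq_mul_div, div_mul_cancel₀ _ (hspos mm).ne']
    intro m1 m2 i1 i2 h11 h21 h12 h22
    rw [hdd m1 i1 i2 h11 h21, hdd m2 i1 i2 h12 h22]
  refine ⟨ω, hωGam, ?_, hbal⟩
  -- positivity facts
  have hTpos : ∀ p, 0 < ∑ m ∈ Finset.univ.filter (fun m => p ∈ S m), ∑ j ∈ S m, y j := by
    intro p
    obtain ⟨m, hm⟩ := hcov p
    exact Finset.sum_pos' (fun m' _ => Finset.sum_nonneg fun j _ => (hypos j).le)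
      ⟨m, Finset.mem_filter.mpr ⟨Finset.mem_univ m, hm⟩, hspos m⟩
  have hApos : ∀ p, 0 < ∑ m ∈ clientsOf S p, (∑ j ∈ S m, y j) ^ 2 := by
    intro p
    obtain ⟨m, hm⟩ := hcov p
    exact Finset.sum_pos' (fun m' _ => sq_nonneg _)
      ⟨m, mem_clientsOf_of_mem hm, pow_pos (hspos m) 2⟩
  -- the value of each term of the objective
  have hterm : ∀ (u : Fin M → Fin K → ℝ) (jj : Fin K),
      Delta S v jj ^ 2 / 2 / armDenom S u jj
        = Dq S v jj / ∑ m ∈ Finset.univ.filter (fun m => jj ∈ S m), 1 / u m jj := by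
    intro u jj
    rw [armDenom, Dq, one_div_mul_eq_div, div_div_eq_mul_div]
    ring
  have hHω : ∀ p, (∑ m ∈ Finset.univ.filter (fun m => p ∈ S m), 1 / ω m p)
      = (∑ m ∈ Finset.univ.filter (fun m => p ∈ S m), ∑ j ∈ S m, y j) / y p := by
    intro p
    rw [Finset.sum_div]
    apply Finset.sum_congr rfl
    intro m hm
    have hp : p ∈ S m := (Finset.mem_filter.mp hm).2
    simp only [hωdef, if_pos hp]
    rw [one_div_div]
  have hωne : ¬ ∃ m, ∃ i ∈ S m, ω m i = 0 := by
    rintro ⟨m, i, hi, h0⟩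
    exact (hωpos m i hi).ne' h0
  have hsetfin : ∀ u : Fin M → Fin K → ℝ,
      {x | ∃ i : Fin K, x = Delta S v i ^ 2 / 2 / armDenom S u i}.Finite := fun u => by
    apply Set.Finite.subset
      (Set.finite_range fun i : Fin K => Delta S v i ^ 2 / 2 / armDenom S u i)
    rintro x ⟨i, rfl⟩
    exact ⟨i, rfl⟩
  have hsetne : ∀ u : Fin M → Fin K → ℝ,
      {x | ∃ i : Fin K, x = Delta S v i ^ 2 / 2 / armDenom S u i}.Nonempty := fun u =>
    ⟨_, ⟨Classical.arbitrary (Fin K), rfl⟩⟩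
  obtain ⟨i₀, hi₀⟩ := (hsetne ω).csInf_mem (hsetfin ω)
  have hgt : gtilde S v ω = Delta S v i₀ ^ 2 / 2 / armDenom S ω i₀ := by
    rw [gtilde, if_neg hωne]
    exact hi₀
  have hkey := key_ineq hDq hyE hymax i₀
  have hT0 := hTpos i₀
  have hA0 := hApos i₀
  have hf0 : 1 / (∑ m ∈ clientsOf S i₀, (∑ j ∈ S m, y j) ^ 2)
      ≤ Delta S v i₀ ^ 2 / 2 / armDenom S ω i₀ := by
    rw [hterm ω i₀, hHω i₀, div_div_eq_mul_div, div_le_div_iff₀ hA0 hT0]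
    nlinarith [hkey]
  intro ω' hω'
  by_cases hz' : ∃ m, ∃ i ∈ S m, ω' m i = 0
  · rw [gtilde, if_pos hz', hgt, hterm ω i₀, hHω i₀]
    exact div_nonneg (hDq i₀).le (div_nonneg hT0.le (hypos i₀).le)
  · rw [gtilde, if_neg hz', hgt]
    have hω'pos : ∀ m, ∀ i ∈ S m, 0 < ω' m i := by
      intro m i hi
      rcases (hω'.1 m i hi).lt_or_eq with h | h
      · exact h
      · exact absurd ⟨m, i, hi, h.symm⟩ hz'
    -- per-client Cauchy–Schwarz
    have hCS : ∀ m : Fin M, (∑ j ∈ S m, y j) ^ 2 ≤ ∑ j ∈ S m, y j ^ 2 / ω' m j := by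
      intro m
      have h1 := Finset.sum_mul_sq_le_sq_mul_sq (S m) (fun j => Real.sqrt (ω' m j))
        (fun j => y j / Real.sqrt (ω' m j))
      have h2 : ∑ j ∈ S m, Real.sqrt (ω' m j) * (y j / Real.sqrt (ω' m j))
          = ∑ j ∈ S m, y j := by
        apply Finset.sum_congr rfl
        intro j hj
        rw [mul_comm, div_mul_cancel₀ _ (ne_of_gt (Real.sqrt_pos.mpr (hω'pos m j hj)))]
      have h3 : ∑ j ∈ S m, (Real.sqrt (ω' m j)) ^ 2 = 1 := by
        rw [Finset.sum_congr rfl fun j hj => Real.sq_sqrt (hω'pos m j hj).le]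
        exact hω'.2.1 m
      have h4 : ∀ j ∈ S m, (y j / Real.sqrt (ω' m j)) ^ 2 = y j ^ 2 / ω' m j := by
        intro j hj
        rw [div_pow, Real.sq_sqrt (hω'pos m j hj).le]
      calc (∑ j ∈ S m, y j) ^ 2
          = (∑ j ∈ S m, Real.sqrt (ω' m j) * (y j / Real.sqrt (ω' m j))) ^ 2 := by rw [h2]
        _ ≤ (∑ j ∈ S m, (Real.sqrt (ω' m j)) ^ 2)
            * ∑ j ∈ S m, (y j / Real.sqrt (ω' m j)) ^ 2 := h1
        _ = 1 * ∑ j ∈ S m, y j ^ 2 / ω' m j := by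
            rw [h3, Finset.sum_congr rfl h4]
        _ = ∑ j ∈ S m, y j ^ 2 / ω' m j := one_mul _
    -- the swap identity
    have hswap : ∑ jj ∈ classFinset S i₀,
        y jj ^ 2 * ∑ m ∈ Finset.univ.filter (fun m => jj ∈ S m), 1 / ω' m jj
          = ∑ m ∈ clientsOf S i₀, ∑ jj ∈ S m, y jj ^ 2 / ω' m jj := by
      have h5 : ∀ jj ∈ classFinset S i₀,
          y jj ^ 2 * ∑ m ∈ Finset.univ.filter (fun m => jj ∈ S m), 1 / ω' m jj
            = ∑ m : Fin M, (if jj ∈ S m then y jj ^ 2 / ω' m jj else 0) := by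
        intro jj _
        rw [Finset.mul_sum, ← Finset.sum_filter]
        apply Finset.sum_congr rfl
        intro m _
        rw [mul_one_div]
      rw [Finset.sum_congr rfl h5, Finset.sum_comm]
      rw [← Finset.sum_subset (Finset.subset_univ (clientsOf S i₀))]
      · apply Finset.sum_congr rfl
        intro m hm
        have hsub : S m ⊆ classFinset S i₀ := fun jj hjj =>
          mem_classFinset.mpr (rel_of_clientsOf hm hjj)
        rw [Finset.sum_ite_mem, Finset.inter_eq_right.mpr hsub]
      · intro m _ hm
        apply Finset.sum_eq_zero
        intro jj hjj
        have : jj ∉ S m := fun hmem =>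
          hm (mem_clientsOf.mpr ⟨jj, hmem, mem_classFinset.mp hjj⟩)
        rw [if_neg this]
    -- existence of a dominated arm in the class of i₀
    have hsum1 := hyE.2 i₀
    have hAle : ∑ jj ∈ classFinset S i₀,
        (Dq S v jj * y jj ^ 2) * (∑ m ∈ clientsOf S i₀, (∑ j ∈ S m, y j) ^ 2)
          ≤ ∑ jj ∈ classFinset S i₀, (Dq S v jj * y jj ^ 2)
            * ((∑ m ∈ Finset.univ.filter (fun m => jj ∈ S m), 1 / ω' m jj) / Dq S v jj) := by
      have hL : ∑ jj ∈ classFinset S i₀,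
          (Dq S v jj * y jj ^ 2) * (∑ m ∈ clientsOf S i₀, (∑ j ∈ S m, y j) ^ 2)
            = ∑ m ∈ clientsOf S i₀, (∑ j ∈ S m, y j) ^ 2 := by
        rw [← Finset.sum_mul, hsum1, one_mul]
      have hR : ∀ jj ∈ classFinset S i₀, (Dq S v jj * y jj ^ 2)
          * ((∑ m ∈ Finset.univ.filter (fun m => jj ∈ S m), 1 / ω' m jj) / Dq S v jj)
            = y jj ^ 2 * ∑ m ∈ Finset.univ.filter (fun m => jj ∈ S m), 1 / ω' m jj := by
        intro jj _
        rw [mul_comm (Dq S v jj) (y jj ^ 2), mul_assoc, ← mul_div_assoc,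
          mul_div_cancel_left₀ _ (hDq jj).ne']
      rw [hL, Finset.sum_congr rfl hR, hswap]
      exact Finset.sum_le_sum fun m _ => hCS m
    obtain ⟨j, hjC, hjle⟩ := Finset.exists_le_of_sum_le
      ⟨i₀, mem_classFinset.mpr (Relation.EqvGen.refl i₀)⟩ hAle
    have hypj : 0 < Dq S v j * y j ^ 2 := mul_pos (hDq j) (pow_pos (hypos j) 2)
    have hAle2 : (∑ m ∈ clientsOf S i₀, (∑ j ∈ S m, y j) ^ 2)
        ≤ (∑ m ∈ Finset.univ.filter (fun m => j ∈ S m), 1 / ω' m j) / Dq S v j :=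
      (mul_le_mul_iff_right₀ hypj).mp hjle
    have hH'j : (∑ m ∈ clientsOf S i₀, (∑ j ∈ S m, y j) ^ 2) * Dq S v j
        ≤ ∑ m ∈ Finset.univ.filter (fun m => j ∈ S m), 1 / ω' m j :=
      (le_div_iff₀ (hDq j)).mp hAle2
    have hH'pos : 0 < ∑ m ∈ Finset.univ.filter (fun m => j ∈ S m), 1 / ω' m j :=
      lt_of_lt_of_le (mul_pos hA0 (hDq j)) hH'j
    calc sInf {x | ∃ i : Fin K, x = Delta S v i ^ 2 / 2 / armDenom S ω' i}
        ≤ Delta S v j ^ 2 / 2 / armDenom S ω' j :=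
          csInf_le (hsetfin ω').bddBelow ⟨j, rfl⟩
      _ ≤ 1 / (∑ m ∈ clientsOf S i₀, (∑ j ∈ S m, y j) ^ 2) := by
          rw [hterm ω' j, div_le_div_iff₀ hH'pos hA0]
          nlinarith [hH'j]
      _ ≤ Delta S v i₀ ^ 2 / 2 / armDenom S ω i₀ := hf0


end

end HetTS
end
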